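/- arXiv:1906.09507 — 8 statements merged into one kernel-verified Lean document; each statement's English description precedes it below -/
import Mathlib

section
/- Let X = (X_t)_{t∈ℝ} be a stochastic process with values in a standard Borel space (𝒳, Σ) that is locally exchangeable with respect to a premetric d on ℝ, and suppose there exist constants C ≥ 0, δ > 0, and γ > 1 such that d(t, t') ≤ C|t − t'|^{1+γ} whenever |t − t'| ≤ δ. Then X is exchangeable: for every finite subset T ⊆ ℝ and every injection π : T → ℝ, the law of (X_t)_{t∈T} equals the law of (X_{π(t)})_{t∈T} as probability measures on 𝒳^T. -/
open MeasureTheory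

/-- Total variation distance between two measures:
`sup_{A measurable} |μ(A) − ν(A)|`. -/
noncomputable def tvDist {𝒴 : Type*} [MeasurableSpace 𝒴] (μ ν : Measure 𝒴) : ℝ :=
  ⨆ A : {A : Set 𝒴 // MeasurableSet A}, |(μ A.1).toReal - (ν A.1).toReal|

section AuxTV

variable {𝒴 𝒵 : Type*} [MeasurableSpace 𝒴] [MeasurableSpace 𝒵]

instance instNonemptyMeasurableSubtype : Nonempty {A : Set 𝒴 // MeasurableSet A} :=
  ⟨⟨∅, MeasurableSet.empty⟩⟩

lemma tv_bdd (μ ν : Measure 𝒴) [IsProbabilityMeasure μ] [IsProbabilityMeasure ν] :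
    BddAbove (Set.range fun A : {A : Set 𝒴 // MeasurableSet A} =>
      |(μ A.1).toReal - (ν A.1).toReal|) := by
  refine ⟨2, ?_⟩
  rintro x ⟨A, rfl⟩
  have h1 : (μ A.1).toReal ≤ 1 := by
    have h : μ A.1 ≤ 1 := prob_le_one
    simpa using ENNReal.toReal_mono (by simp) h
  have h2 : (ν A.1).toReal ≤ 1 := by
    have h : ν A.1 ≤ 1 := prob_le_one
    simpa using ENNReal.toReal_mono (by simp) h
  have h3 : 0 ≤ (μ A.1).toReal := ENNReal.toReal_nonneg
  have h4 : 0 ≤ (ν A.1).toReal := ENNReal.toReal_nonneg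
  rw [abs_le]
  constructor <;> linarith

lemma abs_le_tvDist (μ ν : Measure 𝒴) [IsProbabilityMeasure μ] [IsProbabilityMeasure ν]
    {A : Set 𝒴} (hA : MeasurableSet A) :
    |(μ A).toReal - (ν A).toReal| ≤ tvDist μ ν :=
  le_ciSup (tv_bdd μ ν) (⟨A, hA⟩ : {A : Set 𝒴 // MeasurableSet A})

lemma tvDist_le (μ ν : Measure 𝒴) {c : ℝ}
    (h : ∀ A : Set 𝒴, MeasurableSet A → |(μ A).toReal - (ν A).toReal| ≤ c) :
    tvDist μ ν ≤ c :=
  ciSup_le fun A => h A.1 A.2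

lemma tvDist_self (μ : Measure 𝒴) : tvDist μ μ = 0 := by
  simp [tvDist, ciSup_const]

lemma tvDist_triangle (μ ν κ : Measure 𝒴) [IsProbabilityMeasure μ] [IsProbabilityMeasure ν]
    [IsProbabilityMeasure κ] : tvDist μ κ ≤ tvDist μ ν + tvDist ν κ :=
  tvDist_le _ _ fun A hA =>
    (abs_sub_le _ _ _).trans (add_le_add (abs_le_tvDist μ ν hA) (abs_le_tvDist ν κ hA))

lemma tvDist_map_le (μ ν : Measure 𝒴) [IsProbabilityMeasure μ] [IsProbabilityMeasure ν]
    {g : 𝒴 → 𝒵} (hg : Measurable g) :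
    tvDist (μ.map g) (ν.map g) ≤ tvDist μ ν := by
  refine tvDist_le _ _ fun A hA => ?_
  rw [Measure.map_apply hg hA, Measure.map_apply hg hA]
  exact abs_le_tvDist μ ν (hg hA)

end AuxTV

/-- a locally exchangeable process `X = (X_t)_{t∈ℝ}` whose premetric
satisfies `d(t,t') ≤ C|t−t'|^{1+γ}` for `|t−t'| ≤ δ` with `γ > 1` is exchangeable:
for every finite `T ⊆ ℝ` and injection `π : T → ℝ`, the laws of `(X_t)_{t∈T}` and
`(X_{π(t)})_{t∈T}` coincide. -/
theorem stmt4
    {Ω 𝒳 : Type*} [MeasurableSpace Ω] [MeasurableSpace 𝒳] [StandardBorelSpace 𝒳]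
    (ℙ : Measure Ω) [IsProbabilityMeasure ℙ]
    (X : ℝ → Ω → 𝒳) (hX : ∀ t, Measurable (X t))
    (d : ℝ → ℝ → ℝ)
    (hd0 : ∀ t t', 0 ≤ d t t') (hd1 : ∀ t t', d t t' ≤ 1)
    (hdsymm : ∀ t t', d t t' = d t' t) (hdrefl : ∀ t, d t t = 0)
    (hexch : ∀ (T : Finset ℝ) (π : ℝ → ℝ), Set.InjOn π ↑T →
      tvDist (Measure.map (fun ω => fun t : T => X t.1 ω) ℙ)
             (Measure.map (fun ω => fun t : T => X (π t.1) ω) ℙ)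
        ≤ ∑ t ∈ T, d t (π t))
    (C δ γ : ℝ) (hC : 0 ≤ C) (hδ : 0 < δ) (hγ : 1 < γ)
    (hdbd : ∀ t t' : ℝ, |t - t'| ≤ δ → d t t' ≤ C * |t - t'| ^ (1 + γ)) :
    ∀ (T : Finset ℝ) (π : ℝ → ℝ), Set.InjOn π ↑T →
      Measure.map (fun ω => fun t : T => X t.1 ω) ℙ
        = Measure.map (fun ω => fun t : T => X (π t.1) ω) ℙ := by
  intro T π hπ
  classical
  set ν : (ℝ → ℝ) → Measure (↥T → 𝒳) :=
    fun p => Measure.map (fun ω => fun t : T => X (p t.1) ω) ℙ with hνdef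
  have hmeas : ∀ p : ℝ → ℝ, Measurable (fun ω => fun t : T => X (p t.1) ω) :=
    fun p => measurable_pi_lambda _ fun t => hX _
  have hprob : ∀ p : ℝ → ℝ, IsProbabilityMeasure (ν p) :=
    fun p => Measure.isProbabilityMeasure_map (hmeas p).aemeasurable
  suffices hts : ∀ ε : ℝ, 0 < ε → tvDist (ν (fun r => r)) (ν π) ≤ ε by
    have h0 : tvDist (ν (fun r => r)) (ν π) ≤ 0 := by
      by_contra hc
      push_neg at hc
      have h2 := hts (tvDist (ν (fun r => r)) (ν π) / 2) (by linarith)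
      linarith
    haveI := hprob (fun r => r)
    haveI := hprob π
    have heq : ν (fun r => r) = ν π := by
      apply Measure.ext
      intro A hA
      have habs := (abs_le_tvDist (ν (fun r => r)) (ν π) hA).trans h0
      have h0' : |((ν (fun r => r)) A).toReal - ((ν π) A).toReal| = 0 :=
        le_antisymm habs (abs_nonneg _)
      have h1' := sub_eq_zero.mp (abs_eq_zero.mp h0')
      exact (ENNReal.toReal_eq_toReal_iff' (measure_ne_top _ _) (measure_ne_top _ _)).mp h1'
    exact heq
  -- key comparison lemma: any two injective configurations
  have key : ∀ π1 π2 : ℝ → ℝ, Set.InjOn π1 ↑T → Set.InjOn π2 ↑T →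
      tvDist (ν π1) (ν π2) ≤ ∑ t ∈ T, d (π1 t) (π2 t) := by
    intro π1 π2 h1 h2
    set σ : ℝ → ℝ := fun r => π2 (Function.invFunOn π1 ↑T r) with hσdef
    have hσπ : ∀ t ∈ (T : Set ℝ), σ (π1 t) = π2 t := by
      intro t ht
      show π2 (Function.invFunOn π1 ↑T (π1 t)) = π2 t
      rw [h1.leftInvOn_invFunOn ht]
    have hσinj : Set.InjOn σ ↑(T.image π1) := by
      intro a ha b hb hab
      rw [Finset.coe_image] at ha hb
      obtain ⟨t, ht, rfl⟩ := ha
      obtain ⟨u, hu, rfl⟩ := hb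
      rw [hσπ t ht, hσπ u hu] at hab
      exact congrArg π1 (h2 ht hu hab)
    have hbound := hexch (T.image π1) σ hσinj
    set g : (↥(T.image π1) → 𝒳) → (↥T → 𝒳) :=
      fun x t => x ⟨π1 t.1, Finset.mem_image_of_mem π1 t.2⟩ with hgdef
    have hgmeas : Measurable g := measurable_pi_lambda _ fun t => measurable_pi_apply _
    have hf1 : Measurable (fun ω => fun s : ↥(T.image π1) => X s.1 ω) :=
      measurable_pi_lambda _ fun s => hX _
    have hf2 : Measurable (fun ω => fun s : ↥(T.image π1) => X (σ s.1) ω) :=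
      measurable_pi_lambda _ fun s => hX _
    have e1 : ν π1
        = Measure.map g (Measure.map (fun ω => fun s : ↥(T.image π1) => X s.1 ω) ℙ) := by
      rw [Measure.map_map hgmeas hf1]
      rfl
    have e2 : ν π2
        = Measure.map g (Measure.map (fun ω => fun s : ↥(T.image π1) => X (σ s.1) ω) ℙ) := by
      rw [Measure.map_map hgmeas hf2]
      have hc : (g ∘ fun ω => fun s : ↥(T.image π1) => X (σ s.1) ω)
          = fun ω => fun t : T => X (π2 t.1) ω := by
        funext ω t
        show X (σ (π1 t.1)) ω = X (π2 t.1) ω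
        rw [hσπ t.1 (Finset.mem_coe.mpr t.2)]
      rw [hc]
    haveI : IsProbabilityMeasure
        (Measure.map (fun ω => fun s : ↥(T.image π1) => X s.1 ω) ℙ) :=
      Measure.isProbabilityMeasure_map hf1.aemeasurable
    haveI : IsProbabilityMeasure
        (Measure.map (fun ω => fun s : ↥(T.image π1) => X (σ s.1) ω) ℙ) :=
      Measure.isProbabilityMeasure_map hf2.aemeasurable
    calc tvDist (ν π1) (ν π2)
        ≤ tvDist (Measure.map (fun ω => fun s : ↥(T.image π1) => X s.1 ω) ℙ)
            (Measure.map (fun ω => fun s : ↥(T.image π1) => X (σ s.1) ω) ℙ) := by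
          rw [e1, e2]
          exact tvDist_map_le _ _ hgmeas
      _ ≤ ∑ t ∈ T.image π1, d t (σ t) := hbound
      _ = ∑ t ∈ T, d (π1 t) (σ (π1 t)) :=
          Finset.sum_image fun x hx y hy hxy =>
            h1 (Finset.mem_coe.mpr hx) (Finset.mem_coe.mpr hy) hxy
      _ = ∑ t ∈ T, d (π1 t) (π2 t) :=
          Finset.sum_congr rfl fun t ht => by rw [hσπ t (Finset.mem_coe.mpr ht)]
  -- the interpolation path
  set φ : ℝ → ℝ → ℝ := fun a t => t + a * (π t - t) with hφ
  set B : Set ℝ := {a : ℝ | ∃ t ∈ (T : Set ℝ), ∃ u ∈ (T : Set ℝ), t ≠ u ∧ φ a t = φ a u}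
    with hB
  have hBfin : B.Finite := by
    have hsub : B ⊆ ⋃ t ∈ (T : Set ℝ), ⋃ u ∈ (T : Set ℝ), {a : ℝ | t ≠ u ∧ φ a t = φ a u} := by
      rintro a ⟨t, ht, u, hu, h⟩
      exact Set.mem_biUnion ht (Set.mem_biUnion hu h)
    refine Set.Finite.subset ?_ hsub
    refine Set.Finite.biUnion T.finite_toSet fun t _ => ?_
    refine Set.Finite.biUnion T.finite_toSet fun u _ => ?_
    refine Set.Subsingleton.finite ?_
    rintro a ⟨hne, ha⟩ b ⟨-, hb⟩
    simp only [hφ] at ha hb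
    have key2 : (a - b) * ((π t - t) - (π u - u)) = 0 := by linear_combination ha - hb
    have hcne : (π t - t) - (π u - u) ≠ 0 := fun h0 =>
      hne (by linear_combination ha - a * h0)
    exact sub_eq_zero.mp ((mul_eq_zero.mp key2).resolve_right hcne)
  have hInj : ∀ a, a ∉ B → Set.InjOn (φ a) ↑T := by
    intro a ha t ht u hu he
    by_contra hne
    apply ha
    rw [hB]
    exact ⟨t, ht, u, hu, hne, he⟩
  have h0B : (0 : ℝ) ∉ B := by
    rw [hB]
    rintro ⟨t, ht, u, hu, hne, he⟩
    simp only [hφ] at he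
    exact hne (by linear_combination he)
  have h1B : (1 : ℝ) ∉ B := by
    rw [hB]
    rintro ⟨t, ht, u, hu, hne, he⟩
    simp only [hφ] at he
    have hpe : π t = π u := by linear_combination he
    exact hne (hπ ht hu hpe)
  -- constants
  intro ε hε
  set K : ℝ := 1 + ∑ t ∈ T, |π t - t| with hK
  have hK0 : (0 : ℝ) < K := by
    rw [hK]
    positivity
  have hKb : ∀ t ∈ T, |π t - t| ≤ K := by
    intro t ht
    have h := Finset.single_le_sum (f := fun t => |π t - t|) (fun i _ => abs_nonneg _) ht
    rw [hK]
    linarith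
  set cst : ℝ := (T.card : ℝ) * C * (2 * K) ^ (1 + γ) with hcst
  obtain ⟨n, hn⟩ := exists_nat_ge (max (max 1 (2 * K / δ)) (cst / ε))
  have hn1 : (1 : ℝ) ≤ (n : ℝ) := le_trans (le_trans (le_max_left _ _) (le_max_left _ _)) hn
  have hn0 : (0 : ℝ) < (n : ℝ) := by linarith
  have hn1' : 1 ≤ n := by exact_mod_cast hn1
  have hKn : 2 * K / δ ≤ (n : ℝ) := le_trans (le_trans (le_max_right _ _) (le_max_left _ _)) hn
  have hcn : cst / ε ≤ (n : ℝ) := le_trans (le_max_right _ _) hn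
  have hnδ : 2 * K / (n : ℝ) ≤ δ := by
    rw [div_le_iff₀ hn0]
    rw [div_le_iff₀ hδ] at hKn
    nlinarith
  have hnε : cst / (n : ℝ) ≤ ε := by
    rw [div_le_iff₀ hn0]
    rw [div_le_iff₀ hε] at hcn
    nlinarith
  -- choose a fine chain avoiding B
  have H : ∀ k : ℕ, ∃ x : ℝ, x ∉ B ∧
      (k ≤ n → ((k : ℝ) / n ≤ x ∧ x ≤ (k : ℝ) / n + 1 / (2 * n))) ∧
      (k = 0 → x = 0) ∧ (n ≤ k → x = 1) := by
    intro k
    rcases Nat.eq_zero_or_pos k with rfl | hkpos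
    · refine ⟨0, h0B, fun _ => ⟨by simp, by positivity⟩, fun _ => rfl, fun h => absurd h (by omega)⟩
    rcases Nat.lt_or_ge k n with hkn | hkn
    · have hlt : (k : ℝ) / n < (k : ℝ) / n + 1 / (2 * n) :=
        lt_add_of_pos_right _ (by positivity)
      obtain ⟨x, hx⟩ := ((Set.Ioo_infinite hlt).diff hBfin).nonempty
      exact ⟨x, hx.2, fun _ => ⟨hx.1.1.le, hx.1.2.le⟩, fun h => absurd h (by omega),
        fun h => absurd h (by omega)⟩
    · have hk0 : k ≠ 0 := by omega
      refine ⟨1, h1B, fun hkle => ?_, fun h => absurd h hk0, fun _ => rfl⟩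
      have hkeq : k = n := le_antisymm hkle hkn
      rw [hkeq, div_self hn0.ne']
      have hpos : (0 : ℝ) ≤ 1 / (2 * (n : ℝ)) := by positivity
      exact ⟨le_refl 1, by linarith⟩
  choose s hsB hsI hs0 hs1 using H
  -- gap bound
  have gap : ∀ k, k < n → 0 ≤ s (k + 1) - s k ∧ s (k + 1) - s k ≤ 2 / n := by
    intro k hk
    obtain ⟨l1, u1⟩ := hsI k (by omega)
    obtain ⟨l2, u2⟩ := hsI (k + 1) (by omega)
    push_cast at l2 u2
    have e : ((k : ℝ) + 1) / n = (k : ℝ) / n + 1 / n := by ring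
    have h12 : 1 / (2 * (n : ℝ)) ≤ 1 / n :=
      one_div_le_one_div_of_le hn0 (by linarith)
    have e2 : (2 : ℝ) / n = 1 / n + 1 / n := by ring
    constructor <;> linarith
  -- per-step bound
  have step : ∀ k, k < n →
      tvDist (ν (φ (s k))) (ν (φ (s (k + 1)))) ≤ (T.card : ℝ) * (C * (2 * K / n) ^ (1 + γ)) := by
    intro k hk
    refine (key (φ (s k)) (φ (s (k + 1))) (hInj _ (hsB k)) (hInj _ (hsB (k + 1)))).trans ?_
    have hbd : ∀ t ∈ T, d (φ (s k) t) (φ (s (k + 1)) t) ≤ C * (2 * K / n) ^ (1 + γ) := by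
      intro t ht
      have hdiffeq : φ (s k) t - φ (s (k + 1)) t = (s k - s (k + 1)) * (π t - t) := by
        simp only [hφ]
        ring
      have habs : |φ (s k) t - φ (s (k + 1)) t| ≤ 2 * K / n := by
        rw [hdiffeq, abs_mul]
        have hg := gap k hk
        have h1 : |s k - s (k + 1)| ≤ 2 / n := by
          rw [abs_sub_comm, abs_of_nonneg hg.1]
          exact hg.2
        have h2 : |π t - t| ≤ K := hKb t ht
        calc |s k - s (k + 1)| * |π t - t| ≤ (2 / n) * K :=
              mul_le_mul h1 h2 (abs_nonneg _) (by positivity)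
          _ = 2 * K / n := by ring
      refine (hdbd (φ (s k) t) (φ (s (k + 1)) t) (habs.trans hnδ)).trans ?_
      exact mul_le_mul_of_nonneg_left
        (Real.rpow_le_rpow (abs_nonneg _) habs (by linarith)) hC
    calc ∑ t ∈ T, d (φ (s k) t) (φ (s (k + 1)) t)
        ≤ ∑ _t ∈ T, C * (2 * K / n) ^ (1 + γ) := Finset.sum_le_sum hbd
      _ = (T.card : ℝ) * (C * (2 * K / n) ^ (1 + γ)) := by
          rw [Finset.sum_const, nsmul_eq_mul]
  -- telescoping
  have tel : ∀ m : ℕ, tvDist (ν (φ (s 0))) (ν (φ (s m))) ≤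
      ∑ k ∈ Finset.range m, tvDist (ν (φ (s k))) (ν (φ (s (k + 1)))) := by
    intro m
    induction m with
    | zero => simp [tvDist_self]
    | succ m ih =>
        rw [Finset.sum_range_succ]
        haveI := hprob (φ (s 0))
        haveI := hprob (φ (s m))
        haveI := hprob (φ (s (m + 1)))
        have tri := tvDist_triangle (ν (φ (s 0))) (ν (φ (s m))) (ν (φ (s (m + 1))))
        linarith
  have main : tvDist (ν (φ (s 0))) (ν (φ (s n)))
      ≤ (n : ℝ) * ((T.card : ℝ) * (C * (2 * K / n) ^ (1 + γ))) := by
    refine (tel n).trans ?_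
    calc ∑ k ∈ Finset.range n, tvDist (ν (φ (s k))) (ν (φ (s (k + 1))))
        ≤ ∑ _k ∈ Finset.range n, (T.card : ℝ) * (C * (2 * K / n) ^ (1 + γ)) :=
          Finset.sum_le_sum fun k hk => step k (Finset.mem_range.mp hk)
      _ = (n : ℝ) * ((T.card : ℝ) * (C * (2 * K / n) ^ (1 + γ))) := by
          rw [Finset.sum_const, Finset.card_range, nsmul_eq_mul]
  -- algebra: the bound is at most ε
  have h2K : (0 : ℝ) < 2 * K := by linarith
  have hsplit : (2 * K / (n : ℝ)) ^ (1 + γ) = (2 * K) ^ (1 + γ) * ((1 : ℝ) / n) ^ (1 + γ) := by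
    rw [← Real.mul_rpow h2K.le (by positivity)]
    congr 1
    ring
  have hexp : ((1 : ℝ) / n) ^ (1 + γ) ≤ ((1 : ℝ) / n) ^ ((2 : ℕ) : ℝ) :=
    Real.rpow_le_rpow_of_exponent_ge (by positivity)
      (by rw [div_le_one hn0]; exact hn1) (by push_cast; linarith)
  rw [Real.rpow_natCast] at hexp
  have hQ : (0 : ℝ) ≤ (2 * K) ^ (1 + γ) := Real.rpow_nonneg h2K.le _
  have h1a : (2 * K / (n : ℝ)) ^ (1 + γ) ≤ (2 * K) ^ (1 + γ) / (n : ℝ) ^ 2 := by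
    rw [hsplit]
    calc (2 * K) ^ (1 + γ) * ((1 : ℝ) / n) ^ (1 + γ)
        ≤ (2 * K) ^ (1 + γ) * ((1 : ℝ) / n) ^ (2 : ℕ) :=
          mul_le_mul_of_nonneg_left hexp hQ
      _ = (2 * K) ^ (1 + γ) / (n : ℝ) ^ 2 := by
          field_simp
  have halg : (n : ℝ) * ((T.card : ℝ) * (C * (2 * K / n) ^ (1 + γ))) ≤ ε := by
    have hb1 : (n : ℝ) * ((T.card : ℝ) * (C * (2 * K / n) ^ (1 + γ)))
        ≤ (n : ℝ) * ((T.card : ℝ) * (C * ((2 * K) ^ (1 + γ) / (n : ℝ) ^ 2))) := by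
      apply mul_le_mul_of_nonneg_left _ hn0.le
      apply mul_le_mul_of_nonneg_left _ (Nat.cast_nonneg _)
      exact mul_le_mul_of_nonneg_left h1a hC
    have hb2 : (n : ℝ) * ((T.card : ℝ) * (C * ((2 * K) ^ (1 + γ) / (n : ℝ) ^ 2)))
        = cst / n := by
      rw [hcst]
      field_simp
    calc (n : ℝ) * ((T.card : ℝ) * (C * (2 * K / n) ^ (1 + γ))) ≤ cst / n := by
          rw [← hb2]; exact hb1
      _ ≤ ε := hnε
  have hfin := main.trans halg
  rw [hs0 0 rfl, hs1 n le_rfl] at hfin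
  have e0 : φ 0 = fun r => r := by
    funext t
    simp only [hφ]
    ring
  have e1 : φ 1 = π := by
    funext t
    simp only [hφ]
    ring
  rw [e0, e1] at hfin
  exact hfin
end

section
/- Let (Ω, ℱ, ℙ) be a probability space, 𝒢 ⊆ ℱ a sub-σ-algebra, (𝒳, Σ) a standard Borel space, T a finite index set, and τ an additional index. For each t ∈ T ∪ {τ}, let G_t be a random probability measure on 𝒳 such that ω ↦ G_t(ω)(A) is 𝒢-measurable for every A ∈ Σ. Let (X_t)_{t∈T} be 𝒳-valued random variables that are conditionally independent given 𝒢 with conditional distributions G_t, in the sense that for all bounded measurable f_t : 𝒳 → ℝ, E[∏_{t∈T} f_t(X_t) | 𝒢] = ∏_{t∈T} ∫ f_t dG_t almost surely. Let h : 𝒳 → [0,1] be measurable, let (ξ_t)_{t∈T} be nonnegative weights with Σ_{t∈T} ξ_t = 1, and suppose (b_t)_{t∈T} satisfy E|∫h dG_t − ∫h dG_τ| ≤ b_t for each t ∈ T. Then E[(Σ_{t∈T} ξ_t h(X_t) − ∫h dG_τ)²] ≤ (1/4) Σ_{t∈T} ξ_t² + Σ_{t∈T} ξ_t b_t. -/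
open MeasureTheory

open ProbabilityTheory in
lemma measurable_integral_randMeasure {Ω 𝒳 : Type*} {m : MeasurableSpace Ω} [MeasurableSpace 𝒳]
    (G : Ω → Measure 𝒳) (hGprob : ∀ ω, IsProbabilityMeasure (G ω))
    (hGmeas : ∀ A : Set 𝒳, MeasurableSet A → Measurable[m] fun ω => (G ω A).toReal)
    (f : 𝒳 → ℝ) (hf : Measurable f) :
    Measurable[m] fun ω => ∫ x, f x ∂(G ω) := by
  have hG : @Measurable Ω (Measure 𝒳) m _ G := by
    refine Measure.measurable_of_measurable_coe _ fun s hs => ?_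
    have h1 : (fun ω => G ω s) = fun ω => ENNReal.ofReal ((G ω s).toReal) := by
      funext ω
      haveI := hGprob ω
      rw [ENNReal.ofReal_toReal (measure_ne_top (G ω) s)]
    rw [h1]
    exact (hGmeas s hs).ennreal_ofReal
  let κ : @Kernel Ω 𝒳 m _ := ⟨G, hG⟩
  haveI : IsMarkovKernel κ := ⟨hGprob⟩
  have hsm : StronglyMeasurable[m] fun ω => ∫ x, (fun p : Ω × 𝒳 => f p.2) (ω, x) ∂(κ ω) :=
    MeasureTheory.StronglyMeasurable.integral_kernel_prod_right' (κ := κ)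
      (hf.comp measurable_snd).stronglyMeasurable
  exact hsm.measurable

/-- if `(X_t)_{t∈T}` are conditionally independent given a sub-σ-algebra
`m`, with conditional distributions the random probability measures `G_t`, then for a
measurable `h : 𝒳 → [0,1]`, nonnegative weights `ξ` summing to one, and bounds
`E|∫h dG_t − ∫h dG_τ| ≤ b_t`, the local empirical measure estimate satisfies
`E[(Σ_t ξ_t h(X_t) − ∫h dG_τ)²] ≤ (1/4)Σ_t ξ_t² + Σ_t ξ_t b_t`. -/
theorem stmt6
    {Ω 𝒳 ι : Type*} (m : MeasurableSpace Ω) [mΩ : MeasurableSpace Ω] [MeasurableSpace 𝒳] [StandardBorelSpace 𝒳]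
    [Fintype ι]
    (ℙ : Measure Ω) [IsProbabilityMeasure ℙ]
    (hm : m ≤ mΩ)
    (G : ι → Ω → Measure 𝒳) (Gτ : Ω → Measure 𝒳)
    (hGprob : ∀ t ω, IsProbabilityMeasure (G t ω))
    (hGτprob : ∀ ω, IsProbabilityMeasure (Gτ ω))
    (hGmeas : ∀ t (A : Set 𝒳), MeasurableSet A →
      Measurable[m] fun ω => (G t ω A).toReal)
    (hGτmeas : ∀ (A : Set 𝒳), MeasurableSet A →
      Measurable[m] fun ω => (Gτ ω A).toReal)
    (X : ι → Ω → 𝒳) (hX : ∀ t, Measurable (X t))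
    (hcondindep : ∀ f : ι → 𝒳 → ℝ, (∀ t, Measurable (f t)) →
      (∀ t, ∃ Cf : ℝ, ∀ x, |f t x| ≤ Cf) →
      ℙ[(fun ω => ∏ t : ι, f t (X t ω)) | m]
        =ᵐ[ℙ] fun ω => ∏ t : ι, ∫ x, f t x ∂(G t ω))
    (h : 𝒳 → ℝ) (hh : Measurable h) (h01 : ∀ x, h x ∈ Set.Icc (0 : ℝ) 1)
    (ξ : ι → ℝ) (hξ0 : ∀ t, 0 ≤ ξ t) (hξ1 : ∑ t : ι, ξ t = 1)
    (b : ι → ℝ)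
    (hb : ∀ t, ∫ ω, |∫ x, h x ∂(G t ω) - ∫ x, h x ∂(Gτ ω)| ∂ℙ ≤ b t) :
    ∫ ω, (∑ t : ι, ξ t * h (X t ω) - ∫ x, h x ∂(Gτ ω)) ^ 2 ∂ℙ
      ≤ (1 / 4) * ∑ t : ι, (ξ t) ^ 2 + ∑ t : ι, ξ t * b t := by
  classical
  -- abbreviations
  set a : Ω → ℝ := fun ω => ∫ x, h x ∂(Gτ ω) with ha_def
  set g : ι → Ω → ℝ := fun t ω => ∫ x, h x ∂(G t ω) with hg_def
  set q : ι → Ω → ℝ := fun t ω => ∫ x, h x * h x ∂(G t ω) with hq_def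
  -- basic bounds on h
  have hh0 : ∀ x, 0 ≤ h x := fun x => (h01 x).1
  have hh1 : ∀ x, h x ≤ 1 := fun x => (h01 x).2
  have hhabs : ∀ x, |h x| ≤ 1 := fun x => abs_le.mpr ⟨by linarith [hh0 x], hh1 x⟩
  -- integrability of h and h*h against any probability measure
  have hInth : ∀ (μ : Measure 𝒳), IsProbabilityMeasure μ → Integrable h μ := by
    intro μ hμ
    exact Integrable.mono' (integrable_const 1) hh.aestronglyMeasurable
      (Filter.Eventually.of_forall hhabs)
  have hIntq : ∀ (μ : Measure 𝒳), IsProbabilityMeasure μ → Integrable (fun x => h x * h x) μ := by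
    intro μ hμ
    refine Integrable.mono' (integrable_const 1) (hh.mul hh).aestronglyMeasurable
      (Filter.Eventually.of_forall fun x => ?_)
    rw [Real.norm_eq_abs, abs_mul]
    exact mul_le_one₀ (hhabs x) (abs_nonneg _) (hhabs x)
  -- bounds on g, q, a
  have hg0 : ∀ t ω, 0 ≤ g t ω := fun t ω => integral_nonneg hh0
  have hg1 : ∀ t ω, g t ω ≤ 1 := by
    intro t ω
    haveI := hGprob t ω
    calc g t ω ≤ ∫ _, (1 : ℝ) ∂(G t ω) :=
          integral_mono (hInth _ (hGprob t ω)) (integrable_const 1) hh1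
      _ = 1 := by simp
  have ha0 : ∀ ω, 0 ≤ a ω := fun ω => integral_nonneg hh0
  have ha1 : ∀ ω, a ω ≤ 1 := by
    intro ω
    haveI := hGτprob ω
    calc a ω ≤ ∫ _, (1 : ℝ) ∂(Gτ ω) :=
          integral_mono (hInth _ (hGτprob ω)) (integrable_const 1) hh1
      _ = 1 := by simp
  have hq0 : ∀ t ω, 0 ≤ q t ω := fun t ω => integral_nonneg fun x => mul_nonneg (hh0 x) (hh0 x)
  have hqg : ∀ t ω, q t ω ≤ g t ω := by
    intro t ω
    exact integral_mono (hIntq _ (hGprob t ω)) (hInth _ (hGprob t ω))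
      (fun x => by nlinarith [hh0 x, hh1 x])
  -- measurability
  have hgm : ∀ t, Measurable[m] (g t) := fun t =>
    measurable_integral_randMeasure (G t) (hGprob t) (hGmeas t) h hh
  have hqm : ∀ t, Measurable[m] (q t) := fun t =>
    measurable_integral_randMeasure (G t) (hGprob t) (hGmeas t) _ (hh.mul hh)
  have ham : Measurable[m] a :=
    measurable_integral_randMeasure Gτ hGτprob hGτmeas h hh
  have hgM : ∀ t, Measurable[mΩ] (g t) := fun t => (hgm t).mono hm le_rfl
  have hqM : ∀ t, Measurable[mΩ] (q t) := fun t => (hqm t).mono hm le_rfl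
  have haM : Measurable[mΩ] a := ham.mono hm le_rfl
  have hXhM : ∀ t, Measurable[mΩ] fun ω => h (X t ω) := fun t =>
    (hh.comp (hX t))
  -- generic integrability over ℙ from a bound
  have intOf : ∀ (f : Ω → ℝ), Measurable[mΩ] f → (∀ ω, |f ω| ≤ 1) → Integrable f ℙ := by
    intro f hf hbd
    exact Integrable.mono' (integrable_const 1) hf.aestronglyMeasurable
      (Filter.Eventually.of_forall hbd)
  have abs1 : ∀ x : ℝ, 0 ≤ x → x ≤ 1 → |x| ≤ 1 := fun x h0 h1 => abs_le.mpr ⟨by linarith, h1⟩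
  have absmul : ∀ x y : ℝ, |x| ≤ 1 → |y| ≤ 1 → |x * y| ≤ 1 := by
    intro x y hx hy; rw [abs_mul]; exact mul_le_one₀ hx (abs_nonneg _) hy
  -- KEY IDENTITY 1 (pairs, s ≠ t)
  have K1 : ∀ s t : ι, s ≠ t →
      ∫ ω, h (X s ω) * h (X t ω) ∂ℙ = ∫ ω, g s ω * g t ω ∂ℙ := by
    intro s t hst
    set f : ι → 𝒳 → ℝ := fun r x => if r = s ∨ r = t then h x else 1 with hf_def
    have hfm : ∀ r, Measurable (f r) := by
      intro r
      by_cases hr : r = s ∨ r = t <;> simp only [hf_def, hr, if_true, if_false] <;>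
        first | exact hh | exact measurable_const
    have hfb : ∀ r, ∃ Cf : ℝ, ∀ x, |f r x| ≤ Cf := by
      intro r
      refine ⟨1, fun x => ?_⟩
      by_cases hr : r = s ∨ r = t <;> simp [hf_def, hr, hhabs x]
    have hprodL : (fun ω => ∏ r : ι, f r (X r ω)) = fun ω => h (X s ω) * h (X t ω) := by
      funext ω
      have hsplit : ∀ r : ι, f r (X r ω) =
          (if r = s then h (X r ω) else 1) * (if r = t then h (X r ω) else 1) := by
        intro r
        by_cases h1 : r = s
        · subst h1
          have h2 : ¬ r = t := fun hc => hst (hc ▸ rfl)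
          simp [hf_def, h2]
        · by_cases h2 : r = t
          · subst h2
            have h1' : ¬ (r = s) := h1
            simp [hf_def, h1']
          · simp [hf_def, h1, h2]
      rw [Finset.prod_congr rfl fun r _ => hsplit r, Finset.prod_mul_distrib]
      simp
    have hprodR : (fun ω => ∏ r : ι, ∫ x, f r x ∂(G r ω)) = fun ω => g s ω * g t ω := by
      funext ω
      have hsplit : ∀ r : ι, (∫ x, f r x ∂(G r ω)) =
          (if r = s then g s ω else 1) * (if r = t then g t ω else 1) := by
        intro r
        haveI := hGprob r ω
        by_cases h1 : r = s
        · subst h1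
          have h2 : ¬ r = t := fun hc => hst (hc ▸ rfl)
          simp [hf_def, h2, hg_def]
        · by_cases h2 : r = t
          · subst h2
            simp [hf_def, h1, hg_def]
          · simp [hf_def, h1, h2]
      rw [Finset.prod_congr rfl fun r _ => hsplit r, Finset.prod_mul_distrib]
      simp
    have hci := hcondindep f hfm hfb
    rw [hprodL, hprodR] at hci
    have hint : Integrable (fun ω => h (X s ω) * h (X t ω)) ℙ :=
      intOf _ ((hXhM s).mul (hXhM t)) fun ω => absmul _ _ (hhabs _) (hhabs _)
    calc ∫ ω, h (X s ω) * h (X t ω) ∂ℙ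
        = ∫ ω, (ℙ[(fun ω => h (X s ω) * h (X t ω)) | m]) ω ∂ℙ := (integral_condExp hm).symm
      _ = ∫ ω, g s ω * g t ω ∂ℙ := integral_congr_ae hci
  -- KEY IDENTITY 2 (diagonal)
  have K2 : ∀ t : ι, ∫ ω, h (X t ω) * h (X t ω) ∂ℙ = ∫ ω, q t ω ∂ℙ := by
    intro t
    set f : ι → 𝒳 → ℝ := fun r x => if r = t then h x * h x else 1 with hf_def
    have hfm : ∀ r, Measurable (f r) := by
      intro r
      by_cases hr : r = t <;> simp only [hf_def, hr, if_true, if_false] <;>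
        first | exact hh.mul hh | exact measurable_const
    have hfb : ∀ r, ∃ Cf : ℝ, ∀ x, |f r x| ≤ Cf := by
      intro r
      refine ⟨1, fun x => ?_⟩
      by_cases hr : r = t
      · have hfx : f r x = h x * h x := by simp [hf_def, hr]
        rw [hfx]
        exact absmul _ _ (hhabs x) (hhabs x)
      · simp [hf_def, hr]
    have hprodL : (fun ω => ∏ r : ι, f r (X r ω)) = fun ω => h (X t ω) * h (X t ω) := by
      funext ω
      have : ∏ r : ι, f r (X r ω) = ∏ r : ι, (if r = t then h (X r ω) * h (X r ω) else 1) := by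
        refine Finset.prod_congr rfl fun r _ => ?_
        by_cases hr : r = t <;> simp [hf_def, hr]
      rw [this, Finset.prod_ite_eq' Finset.univ t (fun r => h (X r ω) * h (X r ω))]
      simp
    have hprodR : (fun ω => ∏ r : ι, ∫ x, f r x ∂(G r ω)) = fun ω => q t ω := by
      funext ω
      have : ∏ r : ι, (∫ x, f r x ∂(G r ω)) = ∏ r : ι, (if r = t then q r ω else 1) := by
        refine Finset.prod_congr rfl fun r _ => ?_
        haveI := hGprob r ω
        by_cases hr : r = t <;> simp [hf_def, hr, hq_def]
      rw [this, Finset.prod_ite_eq' Finset.univ t (fun r => q r ω)]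
      simp
    have hci := hcondindep f hfm hfb
    rw [hprodL, hprodR] at hci
    have hint : Integrable (fun ω => h (X t ω) * h (X t ω)) ℙ :=
      intOf _ ((hXhM t).mul (hXhM t)) fun ω => absmul _ _ (hhabs _) (hhabs _)
    calc ∫ ω, h (X t ω) * h (X t ω) ∂ℙ
        = ∫ ω, (ℙ[(fun ω => h (X t ω) * h (X t ω)) | m]) ω ∂ℙ := (integral_condExp hm).symm
      _ = ∫ ω, q t ω ∂ℙ := integral_congr_ae hci
  -- conditional expectation of a single h(X t)
  have KA : ∀ t : ι, ℙ[(fun ω => h (X t ω)) | m] =ᵐ[ℙ] g t := by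
    intro t
    set f : ι → 𝒳 → ℝ := fun r x => if r = t then h x else 1 with hf_def
    have hfm : ∀ r, Measurable (f r) := by
      intro r
      by_cases hr : r = t <;> simp only [hf_def, hr, if_true, if_false] <;>
        first | exact hh | exact measurable_const
    have hfb : ∀ r, ∃ Cf : ℝ, ∀ x, |f r x| ≤ Cf := by
      intro r
      refine ⟨1, fun x => ?_⟩
      by_cases hr : r = t <;> simp [hf_def, hr, hhabs x]
    have hprodL : (fun ω => ∏ r : ι, f r (X r ω)) = fun ω => h (X t ω) := by
      funext ω
      have : ∏ r : ι, f r (X r ω) = ∏ r : ι, (if r = t then h (X r ω) else 1) := by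
        refine Finset.prod_congr rfl fun r _ => ?_
        by_cases hr : r = t <;> simp [hf_def, hr]
      rw [this, Finset.prod_ite_eq' Finset.univ t (fun r => h (X r ω))]
      simp
    have hprodR : (fun ω => ∏ r : ι, ∫ x, f r x ∂(G r ω)) = g t := by
      funext ω
      have : ∏ r : ι, (∫ x, f r x ∂(G r ω)) = ∏ r : ι, (if r = t then g r ω else 1) := by
        refine Finset.prod_congr rfl fun r _ => ?_
        haveI := hGprob r ω
        by_cases hr : r = t <;> simp [hf_def, hr, hg_def]
      rw [this, Finset.prod_ite_eq' Finset.univ t (fun r => g r ω)]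
      simp
    have hci := hcondindep f hfm hfb
    rw [hprodL, hprodR] at hci
    exact hci
  -- KEY IDENTITY 3 (cross term with a)
  have K3 : ∀ t : ι, ∫ ω, h (X t ω) * a ω ∂ℙ = ∫ ω, g t ω * a ω ∂ℙ := by
    intro t
    have hint : Integrable (fun ω => h (X t ω)) ℙ := intOf _ (hXhM t) fun ω => hhabs _
    have hinta : Integrable (fun ω => a ω * h (X t ω)) ℙ :=
      intOf _ (haM.mul (hXhM t)) fun ω => absmul _ _ (abs1 _ (ha0 ω) (ha1 ω)) (hhabs _)
    have hpull := condExp_mul_of_stronglyMeasurable_left (μ := ℙ) (m := m)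
      (f := a) (g := fun ω => h (X t ω)) ham.stronglyMeasurable hinta hint
    have hfin : ℙ[(fun ω => a ω * h (X t ω)) | m] =ᵐ[ℙ] fun ω => a ω * g t ω := by
      refine hpull.trans ?_
      filter_upwards [KA t] with ω hω
      simp only [Pi.mul_apply, hω]
    calc ∫ ω, h (X t ω) * a ω ∂ℙ = ∫ ω, a ω * h (X t ω) ∂ℙ := by
          congr 1; funext ω; ring
      _ = ∫ ω, (ℙ[(fun ω => a ω * h (X t ω)) | m]) ω ∂ℙ := (integral_condExp hm).symm
      _ = ∫ ω, a ω * g t ω ∂ℙ := integral_congr_ae hfin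
      _ = ∫ ω, g t ω * a ω ∂ℙ := by congr 1; funext ω; ring
  -- abbreviations for S and M
  set S : Ω → ℝ := fun ω => ∑ t : ι, ξ t * h (X t ω) with hS_def
  set M : Ω → ℝ := fun ω => ∑ t : ι, ξ t * g t ω with hM_def
  -- expansion of ∫ (S - a)^2
  have hSint : ∀ s t : ι, Integrable (fun ω => ξ s * ξ t * (h (X s ω) * h (X t ω))) ℙ := by
    intro s t
    exact (intOf _ ((hXhM s).mul (hXhM t)) fun ω => absmul _ _ (hhabs _) (hhabs _)).const_mul _
  have hMint : ∀ s t : ι, Integrable (fun ω => ξ s * ξ t * (g s ω * g t ω)) ℙ := by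
    intro s t
    exact (intOf _ ((hgM s).mul (hgM t)) fun ω =>
      absmul _ _ (abs1 _ (hg0 s ω) (hg1 s ω)) (abs1 _ (hg0 t ω) (hg1 t ω))).const_mul _
  have hSaint : ∀ t : ι, Integrable (fun ω => (2 * ξ t) * (h (X t ω) * a ω)) ℙ := by
    intro t
    exact (intOf _ ((hXhM t).mul haM) fun ω =>
      absmul _ _ (hhabs _) (abs1 _ (ha0 ω) (ha1 ω))).const_mul _
  have hMaint : ∀ t : ι, Integrable (fun ω => (2 * ξ t) * (g t ω * a ω)) ℙ := by
    intro t
    exact (intOf _ ((hgM t).mul haM) fun ω =>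
      absmul _ _ (abs1 _ (hg0 t ω) (hg1 t ω)) (abs1 _ (ha0 ω) (ha1 ω))).const_mul _
  have ha2int : Integrable (fun ω => a ω ^ 2) ℙ := by
    refine intOf _ (haM.pow_const 2) fun ω => ?_
    rw [abs_pow]
    exact pow_le_one₀ (abs_nonneg _) (abs1 _ (ha0 ω) (ha1 ω))
  have expand : ∀ (u : Ω → ℝ), (∀ s t : ι, Integrable (fun ω => ξ s * ξ t * (u ω * u ω)) ℙ) →
      True := fun _ _ => trivial
  -- ∫ (S - a)^2 expansion
  have hexpS : ∫ ω, (S ω - a ω) ^ 2 ∂ℙ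
      = (∑ s : ι, ∑ t : ι, ξ s * ξ t * ∫ ω, h (X s ω) * h (X t ω) ∂ℙ)
        - (∑ t : ι, (2 * ξ t) * ∫ ω, h (X t ω) * a ω ∂ℙ) + ∫ ω, a ω ^ 2 ∂ℙ := by
    have hptw : (fun ω => (S ω - a ω) ^ 2)
        = fun ω => (∑ s : ι, ∑ t : ι, ξ s * ξ t * (h (X s ω) * h (X t ω)))
          - (∑ t : ι, (2 * ξ t) * (h (X t ω) * a ω)) + a ω ^ 2 := by
      funext ω
      have h1 : S ω * S ω = ∑ s : ι, ∑ t : ι, ξ s * ξ t * (h (X s ω) * h (X t ω)) := by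
        simp only [hS_def]
        rw [Finset.sum_mul_sum]
        exact Finset.sum_congr rfl fun s _ => Finset.sum_congr rfl fun t _ => by ring
      have h2 : S ω * a ω = ∑ t : ι, ξ t * (h (X t ω) * a ω) := by
        simp only [hS_def]
        rw [Finset.sum_mul]
        exact Finset.sum_congr rfl fun t _ => by ring
      have h3 : (∑ t : ι, (2 * ξ t) * (h (X t ω) * a ω))
          = 2 * ∑ t : ι, ξ t * (h (X t ω) * a ω) := by
        rw [Finset.mul_sum]
        exact Finset.sum_congr rfl fun t _ => by ring
      rw [h3, ← h2, ← h1]; ring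
    have iSS : Integrable (fun ω => ∑ s : ι, ∑ t : ι, ξ s * ξ t * (h (X s ω) * h (X t ω))) ℙ :=
      integrable_finset_sum _ fun s _ => integrable_finset_sum _ fun t _ => hSint s t
    have iSa : Integrable (fun ω => ∑ t : ι, (2 * ξ t) * (h (X t ω) * a ω)) ℙ :=
      integrable_finset_sum _ fun t _ => hSaint t
    have iSub : Integrable (fun ω => (∑ s : ι, ∑ t : ι, ξ s * ξ t * (h (X s ω) * h (X t ω)))
        - (∑ t : ι, (2 * ξ t) * (h (X t ω) * a ω))) ℙ := iSS.sub iSa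
    rw [hptw, integral_add iSub ha2int, integral_sub iSS iSa,
      integral_finset_sum _ fun s _ => integrable_finset_sum _ fun t _ => hSint s t,
      integral_finset_sum _ fun t _ => hSaint t]
    congr 1
    congr 1
    · exact Finset.sum_congr rfl fun s _ => by
        rw [integral_finset_sum _ fun t _ => hSint s t]
        exact Finset.sum_congr rfl fun t _ => integral_const_mul _ _
    · exact Finset.sum_congr rfl fun t _ => integral_const_mul _ _
  -- ∫ (M - a)^2 expansion
  have hexpM : ∫ ω, (M ω - a ω) ^ 2 ∂ℙ
      = (∑ s : ι, ∑ t : ι, ξ s * ξ t * ∫ ω, g s ω * g t ω ∂ℙ)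
        - (∑ t : ι, (2 * ξ t) * ∫ ω, g t ω * a ω ∂ℙ) + ∫ ω, a ω ^ 2 ∂ℙ := by
    have hptw : (fun ω => (M ω - a ω) ^ 2)
        = fun ω => (∑ s : ι, ∑ t : ι, ξ s * ξ t * (g s ω * g t ω))
          - (∑ t : ι, (2 * ξ t) * (g t ω * a ω)) + a ω ^ 2 := by
      funext ω
      have h1 : M ω * M ω = ∑ s : ι, ∑ t : ι, ξ s * ξ t * (g s ω * g t ω) := by
        simp only [hM_def]
        rw [Finset.sum_mul_sum]
        exact Finset.sum_congr rfl fun s _ => Finset.sum_congr rfl fun t _ => by ring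
      have h2 : M ω * a ω = ∑ t : ι, ξ t * (g t ω * a ω) := by
        simp only [hM_def]
        rw [Finset.sum_mul]
        exact Finset.sum_congr rfl fun t _ => by ring
      have h3 : (∑ t : ι, (2 * ξ t) * (g t ω * a ω))
          = 2 * ∑ t : ι, ξ t * (g t ω * a ω) := by
        rw [Finset.mul_sum]
        exact Finset.sum_congr rfl fun t _ => by ring
      rw [h3, ← h2, ← h1]; ring
    have iMM : Integrable (fun ω => ∑ s : ι, ∑ t : ι, ξ s * ξ t * (g s ω * g t ω)) ℙ :=
      integrable_finset_sum _ fun s _ => integrable_finset_sum _ fun t _ => hMint s t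
    have iMa : Integrable (fun ω => ∑ t : ι, (2 * ξ t) * (g t ω * a ω)) ℙ :=
      integrable_finset_sum _ fun t _ => hMaint t
    have iSub : Integrable (fun ω => (∑ s : ι, ∑ t : ι, ξ s * ξ t * (g s ω * g t ω))
        - (∑ t : ι, (2 * ξ t) * (g t ω * a ω))) ℙ := iMM.sub iMa
    rw [hptw, integral_add iSub ha2int, integral_sub iMM iMa,
      integral_finset_sum _ fun s _ => integrable_finset_sum _ fun t _ => hMint s t,
      integral_finset_sum _ fun t _ => hMaint t]
    congr 1
    congr 1
    · exact Finset.sum_congr rfl fun s _ => by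
        rw [integral_finset_sum _ fun t _ => hMint s t]
        exact Finset.sum_congr rfl fun t _ => integral_const_mul _ _
    · exact Finset.sum_congr rfl fun t _ => integral_const_mul _ _
  -- difference between the two expansions
  have hdiff : ∫ ω, (S ω - a ω) ^ 2 ∂ℙ
      = ∫ ω, (M ω - a ω) ^ 2 ∂ℙ
        + ∑ t : ι, ξ t ^ 2 * (∫ ω, q t ω ∂ℙ - ∫ ω, g t ω * g t ω ∂ℙ) := by
    rw [hexpS, hexpM]
    have hcross : (∑ t : ι, (2 * ξ t) * ∫ ω, h (X t ω) * a ω ∂ℙ)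
        = ∑ t : ι, (2 * ξ t) * ∫ ω, g t ω * a ω ∂ℙ :=
      Finset.sum_congr rfl fun t _ => by rw [K3 t]
    have hsq : (∑ s : ι, ∑ t : ι, ξ s * ξ t * ∫ ω, h (X s ω) * h (X t ω) ∂ℙ)
        = (∑ s : ι, ∑ t : ι, ξ s * ξ t * ∫ ω, g s ω * g t ω ∂ℙ)
          + ∑ t : ι, ξ t ^ 2 * (∫ ω, q t ω ∂ℙ - ∫ ω, g t ω * g t ω ∂ℙ) := by
      rw [← Finset.sum_add_distrib]
      refine Finset.sum_congr rfl fun s _ => ?_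
      have hsplit : ∀ t : ι,
          ξ s * ξ t * ∫ ω, h (X s ω) * h (X t ω) ∂ℙ
          = ξ s * ξ t * ∫ ω, g s ω * g t ω ∂ℙ
            + (if t = s then ξ s ^ 2 * (∫ ω, q s ω ∂ℙ - ∫ ω, g s ω * g s ω ∂ℙ) else 0) := by
        intro t
        by_cases hts : t = s
        · subst hts
          rw [if_pos rfl, K2 t]
          ring
        · rw [if_neg hts, K1 s t (fun hc => hts hc.symm), add_zero]
      rw [Finset.sum_congr rfl fun t _ => hsplit t, Finset.sum_add_distrib]
      congr 1
      rw [Finset.sum_ite_eq' Finset.univ s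
        (fun _ => ξ s ^ 2 * (∫ ω, q s ω ∂ℙ - ∫ ω, g s ω * g s ω ∂ℙ))]
      simp
    rw [hcross, hsq]
    ring
  -- bound the variance terms
  have hvar : ∀ t : ι, ∫ ω, q t ω ∂ℙ - ∫ ω, g t ω * g t ω ∂ℙ ≤ 1 / 4 := by
    intro t
    have hint1 : Integrable (q t) ℙ := intOf _ (hqM t) fun ω =>
      abs1 _ (hq0 t ω) ((hqg t ω).trans (hg1 t ω))
    have hint2 : Integrable (fun ω => g t ω * g t ω) ℙ := intOf _ ((hgM t).mul (hgM t))
      fun ω => absmul _ _ (abs1 _ (hg0 t ω) (hg1 t ω)) (abs1 _ (hg0 t ω) (hg1 t ω))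
    rw [← integral_sub hint1 hint2]
    calc ∫ ω, (q t ω - g t ω * g t ω) ∂ℙ ≤ ∫ _, (1 / 4 : ℝ) ∂ℙ := by
          refine integral_mono (hint1.sub hint2) (integrable_const _) fun ω => ?_
          have h1 := hqg t ω
          have h2 := hg0 t ω
          have h3 := hg1 t ω
          nlinarith [sq_nonneg (g t ω - 1 / 2)]
      _ = 1 / 4 := by simp
  -- bound ∫ (M - a)^2
  have hMa : ∫ ω, (M ω - a ω) ^ 2 ∂ℙ ≤ ∑ t : ι, ξ t * b t := by
    have habsint : ∀ t : ι, Integrable (fun ω => ξ t * |g t ω - a ω|) ℙ := by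
      intro t
      have hmdm : Measurable[m] fun ω => |g t ω - a ω| :=
        Measurable.comp (g := fun x : ℝ => |x|) continuous_abs.measurable ((hgm t).sub ham)
      have hmd : Measurable[mΩ] fun ω => |g t ω - a ω| := hmdm.mono hm le_rfl
      refine (intOf _ hmd fun ω => ?_).const_mul _
      rw [abs_abs]
      exact abs_le.mpr ⟨by linarith [hg0 t ω, ha1 ω], by linarith [hg1 t ω, ha0 ω]⟩
    have hint2 : Integrable (fun ω => (M ω - a ω) ^ 2) ℙ := by
      have hMmeas : Measurable[m] M := Finset.measurable_sum _ fun t _ =>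
        (hgm t).const_mul (ξ t)
      have hmdm : Measurable[m] fun ω => (M ω - a ω) ^ 2 :=
        Measurable.pow_const (hMmeas.sub ham) 2
      have hmd : Measurable[mΩ] fun ω => (M ω - a ω) ^ 2 := hmdm.mono hm le_rfl
      refine intOf _ hmd fun ω => ?_
      have hM0 : 0 ≤ M ω := Finset.sum_nonneg fun t _ => mul_nonneg (hξ0 t) (hg0 t ω)
      have hM1 : M ω ≤ 1 := by
        calc M ω ≤ ∑ t : ι, ξ t * 1 := Finset.sum_le_sum fun t _ =>
              mul_le_mul_of_nonneg_left (hg1 t ω) (hξ0 t)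
          _ = 1 := by simp [hξ1]
      rw [abs_pow]
      exact pow_le_one₀ (abs_nonneg _) (abs_le.mpr ⟨by linarith [ha1 ω], by linarith [ha0 ω]⟩)
    calc ∫ ω, (M ω - a ω) ^ 2 ∂ℙ
        ≤ ∫ ω, ∑ t : ι, ξ t * |g t ω - a ω| ∂ℙ := by
          refine integral_mono hint2 (integrable_finset_sum _ fun t _ => habsint t) fun ω => ?_
          have hM0 : 0 ≤ M ω := Finset.sum_nonneg fun t _ => mul_nonneg (hξ0 t) (hg0 t ω)
          have hM1 : M ω ≤ 1 := by
            calc M ω ≤ ∑ t : ι, ξ t * 1 := Finset.sum_le_sum fun t _ =>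
                  mul_le_mul_of_nonneg_left (hg1 t ω) (hξ0 t)
              _ = 1 := by simp [hξ1]
          have habs : |M ω - a ω| ≤ 1 :=
            abs_le.mpr ⟨by linarith [ha1 ω], by linarith [ha0 ω]⟩
          have hMa_eq : M ω - a ω = ∑ t : ι, ξ t * (g t ω - a ω) := by
            simp only [hM_def]
            have : ∑ t : ι, ξ t * (g t ω - a ω) = (∑ t : ι, ξ t * g t ω) - (∑ t : ι, ξ t) * a ω := by
              rw [Finset.sum_mul, ← Finset.sum_sub_distrib]
              exact Finset.sum_congr rfl fun t _ => by ring
            rw [this, hξ1, one_mul]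
          calc (M ω - a ω) ^ 2 = |M ω - a ω| * |M ω - a ω| := by
                rw [← abs_mul, abs_of_nonneg (mul_self_nonneg (M ω - a ω))]
                ring
            _ ≤ 1 * |M ω - a ω| := mul_le_mul_of_nonneg_right habs (abs_nonneg _)
            _ = |M ω - a ω| := one_mul _
            _ = |∑ t : ι, ξ t * (g t ω - a ω)| := by rw [hMa_eq]
            _ ≤ ∑ t : ι, |ξ t * (g t ω - a ω)| := Finset.abs_sum_le_sum_abs _ _
            _ = ∑ t : ι, ξ t * |g t ω - a ω| := Finset.sum_congr rfl fun t _ => by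
                rw [abs_mul, abs_of_nonneg (hξ0 t)]
      _ = ∑ t : ι, ξ t * ∫ ω, |g t ω - a ω| ∂ℙ := by
          rw [integral_finset_sum _ fun t _ => habsint t]
          exact Finset.sum_congr rfl fun t _ => integral_const_mul _ _
      _ ≤ ∑ t : ι, ξ t * b t := Finset.sum_le_sum fun t _ =>
          mul_le_mul_of_nonneg_left (hb t) (hξ0 t)
  -- conclude
  calc ∫ ω, (S ω - a ω) ^ 2 ∂ℙ
      = ∫ ω, (M ω - a ω) ^ 2 ∂ℙ
        + ∑ t : ι, ξ t ^ 2 * (∫ ω, q t ω ∂ℙ - ∫ ω, g t ω * g t ω ∂ℙ) := hdiff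
    _ ≤ (∑ t : ι, ξ t * b t) + ∑ t : ι, ξ t ^ 2 * (1 / 4) := by
        refine add_le_add hMa (Finset.sum_le_sum fun t _ =>
          mul_le_mul_of_nonneg_left (hvar t) (sq_nonneg _))
    _ = (1 / 4) * ∑ t : ι, (ξ t) ^ 2 + ∑ t : ι, ξ t * b t := by
        rw [Finset.mul_sum, add_comm]
        congr 1
        exact Finset.sum_congr rfl fun t _ => by ring
end

section
/- Let (Ω, ℱ, ℙ) be a probability space, 𝒢 ⊆ ℱ a sub-σ-algebra, (𝒳, Σ) a standard Borel space, T a finite index set, and τ an additional index. For each t ∈ T ∪ {τ}, let G_t be a random probability measure on 𝒳 such that ω ↦ G_t(ω)(A) is 𝒢-measurable for every A ∈ Σ. Let (X_t)_{t∈T} be 𝒳-valued random variables that are conditionally independent given 𝒢 with conditional distributions G_t, in the sense that for all bounded measurable f_t : 𝒳 → ℝ, E[∏_{t∈T} f_t(X_t) | 𝒢] = ∏_{t∈T} ∫ f_t dG_t almost surely. Let h : 𝒳 → [0,1] be measurable, let (ξ_t)_{t∈T} be nonnegative weights with Σ_{t∈T} ξ_t = 1, and suppose (b_t)_{t∈T}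 satisfy E|∫h dG_t − ∫h dG_τ| ≤ b_t for each t ∈ T. Then for every δ > 0 and every ε ∈ (0, δ), ℙ(|Σ_{t∈T} ξ_t h(X_t) − ∫h dG_τ| > δ) ≤ 2 exp(−2ε² / Σ_{t∈T} ξ_t²) + (δ − ε)^{-1} Σ_{t∈T} ξ_t b_t. -/
set_option maxHeartbeats 1000000


open MeasureTheory

/-- Core scalar inequality behind Hoeffding's lemma. -/
lemma hoeff_scalar (p : ℝ) (hp0 : 0 ≤ p) (hp1 : p ≤ 1) (s : ℝ) :
    1 - p + p * Real.exp s ≤ Real.exp (s * p + s ^ 2 / 8) := by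
  set d : ℝ → ℝ := fun s => 1 - p + p * Real.exp s with hd_def
  have dpos : ∀ u, 0 < d u := by
    intro u
    rcases eq_or_lt_of_le hp0 with h0 | h0
    · simp [hd_def, ← h0]
    · have := mul_pos h0 (Real.exp_pos u)
      simp only [hd_def]; nlinarith
  set g : ℝ → ℝ := fun u => p * Real.exp u / d u with hg_def
  have hdD : ∀ u, HasDerivAt d (p * Real.exp u) u := by
    intro u
    exact ((Real.hasDerivAt_exp u).const_mul p).const_add (1 - p)
  have hg01 : ∀ u, 0 ≤ g u ∧ g u ≤ 1 := by
    intro u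
    constructor
    · exact div_nonneg (mul_nonneg hp0 (Real.exp_pos u).le) (dpos u).le
    · rw [hg_def, div_le_one (dpos u)]
      have : (0:ℝ) ≤ 1 - p := by linarith
      simp only [hd_def]; linarith
  have hgD : ∀ u, HasDerivAt g (g u * (1 - g u)) u := by
    intro u
    have h1 : HasDerivAt (fun u => p * Real.exp u) (p * Real.exp u) u :=
      (Real.hasDerivAt_exp u).const_mul p
    have h2 := h1.div (hdD u) (dpos u).ne'
    refine h2.congr_deriv ?_
    have hdu := (dpos u).ne'
    simp only [hg_def]
    field_simp
  set φ : ℝ → ℝ := fun u => u * p + u ^ 2 / 8 - Real.log (d u) with hφ_def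
  set ψ : ℝ → ℝ := fun u => p + u / 4 - g u with hψ_def
  have hφD : ∀ u, HasDerivAt φ (ψ u) u := by
    intro u
    have h1 : HasDerivAt (fun u : ℝ => u * p) p u := by
      simpa using (hasDerivAt_id u).mul_const p
    have h2 : HasDerivAt (fun u : ℝ => u ^ 2 / 8) (u / 4) u := by
      have := (hasDerivAt_pow 2 u).div_const 8
      refine this.congr_deriv ?_; norm_num; ring
    have h3 : HasDerivAt (fun u => Real.log (d u)) (p * Real.exp u / d u) u :=
      (hdD u).log (dpos u).ne'
    exact (h1.add h2).sub h3
  have hψD : ∀ u, HasDerivAt ψ (1 / 4 - g u * (1 - g u)) u := by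
    intro u
    have h1 : HasDerivAt (fun u : ℝ => p + u / 4) (1 / 4) u := by
      simpa using ((hasDerivAt_id u).div_const 4).const_add p
    exact h1.sub (hgD u)
  have hψderiv_nonneg : ∀ u, 0 ≤ deriv ψ u := by
    intro u
    rw [(hψD u).deriv]
    obtain ⟨h0, h1⟩ := hg01 u
    nlinarith [sq_nonneg (g u - 1/2)]
  have hψmono : Monotone ψ :=
    monotone_of_deriv_nonneg (fun u => (hψD u).differentiableAt) hψderiv_nonneg
  have hψ0 : ψ 0 = 0 := by
    simp only [hψ_def, hg_def, hd_def]
    norm_num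
  have hφ0 : φ 0 = 0 := by
    simp [hφ_def, hd_def]
  have hφdiff : Differentiable ℝ φ := fun u => (hφD u).differentiableAt
  have key : 0 ≤ φ s := by
    rcases le_total 0 s with hs | hs
    · have hmono : MonotoneOn φ (Set.Ici (0:ℝ)) := by
        refine monotoneOn_of_deriv_nonneg (convex_Ici 0) hφdiff.continuous.continuousOn
          (hφdiff.differentiableOn) ?_
        intro x hx
        rw [(hφD x).deriv]
        rw [interior_Ici] at hx
        have : ψ 0 ≤ ψ x := hψmono hx.le
        linarith [hψ0 ▸ this]
      have := hmono (Set.self_mem_Ici) (Set.mem_Ici.mpr hs) hs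
      linarith [hφ0 ▸ this]
    · have hanti : AntitoneOn φ (Set.Iic (0:ℝ)) := by
        refine antitoneOn_of_deriv_nonpos (convex_Iic 0) hφdiff.continuous.continuousOn
          (hφdiff.differentiableOn) ?_
        intro x hx
        rw [(hφD x).deriv]
        rw [interior_Iic] at hx
        have : ψ x ≤ ψ 0 := hψmono hx.le
        linarith [hψ0 ▸ this]
      have := hanti (Set.mem_Iic.mpr hs) (Set.self_mem_Iic) hs
      linarith [hφ0 ▸ this]
  have hlog : Real.log (d s) ≤ s * p + s ^ 2 / 8 := by
    simp only [hφ_def] at key; linarith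
  calc 1 - p + p * Real.exp s = d s := rfl
    _ = Real.exp (Real.log (d s)) := (Real.exp_log (dpos s)).symm
    _ ≤ Real.exp (s * p + s ^ 2 / 8) := Real.exp_le_exp.mpr hlog

lemma integrable_of_bdd {𝒳 : Type*} {m𝒳 : MeasurableSpace 𝒳} {ν : Measure 𝒳}
    [IsFiniteMeasure ν] {f : 𝒳 → ℝ} (hf : AEStronglyMeasurable f ν) (C : ℝ)
    (hC : ∀ x, |f x| ≤ C) : Integrable f ν :=
  (integrable_const C).mono' hf (Filter.Eventually.of_forall fun x => by
    simpa [Real.norm_eq_abs] using hC x)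

/-- Hoeffding's lemma for a `[0,c]`-valued function. -/
lemma hoeff_meas {𝒳 : Type*} [MeasurableSpace 𝒳] (ν : Measure 𝒳) [IsProbabilityMeasure ν]
    (w : 𝒳 → ℝ) (hw : Measurable w) (c : ℝ) (hw0 : ∀ x, 0 ≤ w x) (hwc : ∀ x, w x ≤ c)
    (s : ℝ) :
    ∫ x, Real.exp (s * w x) ∂ν ≤ Real.exp (s * ∫ x, w x ∂ν + s ^ 2 * c ^ 2 / 8) := by
  have hne : Nonempty 𝒳 := by
    by_contra hc
    rw [not_nonempty_iff] at hc
    have := measure_univ (μ := ν)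
    simp [Set.univ_eq_empty_iff.mpr hc] at this
  have hc0 : 0 ≤ c := le_trans (hw0 (Classical.arbitrary 𝒳)) (hwc _)
  rcases eq_or_lt_of_le hc0 with hc | hc
  · have hw_eq : ∀ x, w x = 0 := fun x => le_antisymm (hc ▸ hwc x) (hw0 x)
    simp [hw_eq]
    positivity
  have hwint : Integrable w ν :=
    integrable_of_bdd hw.aestronglyMeasurable c fun x => abs_le.mpr ⟨by linarith [hw0 x], hwc x⟩
  have hexpint : Integrable (fun x => Real.exp (s * w x)) ν := by
    refine integrable_of_bdd (Measurable.aestronglyMeasurable (by fun_prop)) (Real.exp (|s| * c))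
      (fun x => ?_)
    rw [abs_of_nonneg (Real.exp_pos _).le, Real.exp_le_exp]
    calc s * w x ≤ |s| * w x := mul_le_mul_of_nonneg_right (le_abs_self s) (hw0 x)
      _ ≤ |s| * c := mul_le_mul_of_nonneg_left (hwc x) (abs_nonneg s)
  set q : ℝ := (∫ x, w x ∂ν) / c with hq_def
  have hint0 : 0 ≤ ∫ x, w x ∂ν := integral_nonneg hw0
  have hintc : ∫ x, w x ∂ν ≤ c := by
    calc ∫ x, w x ∂ν ≤ ∫ _, c ∂ν := integral_mono hwint (integrable_const c) hwc
      _ = c := by simp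
  have hq0 : 0 ≤ q := div_nonneg hint0 hc.le
  have hq1 : q ≤ 1 := by rw [hq_def, div_le_one hc]; exact hintc
  have hpt : ∀ x, Real.exp (s * w x) ≤ 1 + ((Real.exp (s * c) - 1) / c) * w x := by
    intro x
    have ha : (0:ℝ) ≤ 1 - w x / c := by
      rw [sub_nonneg, div_le_one hc]; exact hwc x
    have hb : (0:ℝ) ≤ w x / c := div_nonneg (hw0 x) hc.le
    have hab : (1 - w x / c) + w x / c = 1 := by ring
    have := convexOn_exp.2 (Set.mem_univ (0:ℝ)) (Set.mem_univ (s * c)) ha hb hab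
    simp only [smul_eq_mul, mul_zero, zero_add] at this
    have heq : w x / c * (s * c) = s * w x := by
      field_simp
    rw [heq] at this
    calc Real.exp (s * w x) ≤ (1 - w x / c) * Real.exp 0 + w x / c * Real.exp (s * c) := this
      _ = 1 + ((Real.exp (s * c) - 1) / c) * w x := by field_simp; simp only [Real.exp_zero, mul_one]; ring
  have hmono : ∫ x, Real.exp (s * w x) ∂ν ≤ 1 + ((Real.exp (s * c) - 1) / c) * ∫ x, w x ∂ν := by
    calc ∫ x, Real.exp (s * w x) ∂ν
        ≤ ∫ x, (1 + ((Real.exp (s * c) - 1) / c) * w x) ∂ν :=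
          integral_mono hexpint ((integrable_const 1).add (hwint.const_mul _)) hpt
      _ = 1 + ((Real.exp (s * c) - 1) / c) * ∫ x, w x ∂ν := by
          rw [integral_add (integrable_const 1) (hwint.const_mul _), integral_const,
            integral_const_mul]
          simp
  have hrw : 1 + ((Real.exp (s * c) - 1) / c) * ∫ x, w x ∂ν = 1 - q + q * Real.exp (s * c) := by
    rw [hq_def]; field_simp; ring
  have hmain := hoeff_scalar q hq0 hq1 (s * c)
  have hexp_eq : (s * c) * q + (s * c) ^ 2 / 8 = s * ∫ x, w x ∂ν + s ^ 2 * c ^ 2 / 8 := by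
    rw [hq_def]; field_simp
  calc ∫ x, Real.exp (s * w x) ∂ν ≤ 1 - q + q * Real.exp (s * c) := by rw [← hrw]; exact hmono
    _ ≤ Real.exp ((s * c) * q + (s * c) ^ 2 / 8) := hmain
    _ = _ := by rw [hexp_eq]

lemma meas_integral {Ω 𝒳 : Type*} [MeasurableSpace 𝒳] {m : MeasurableSpace Ω}
    (G : Ω → Measure 𝒳) (hprob : ∀ ω, IsProbabilityMeasure (G ω))
    (hmeas : ∀ A : Set 𝒳, MeasurableSet A → Measurable[m] fun ω => (G ω A).toReal)
    (f : 𝒳 → ℝ) (hf : Measurable f) (hf0 : ∀ x, 0 ≤ f x) :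
    Measurable[m] fun ω => ∫ x, f x ∂(G ω) := by
  have hG : Measurable[m] G := by
    refine Measure.measurable_of_measurable_coe G (fun A hA => ?_)
    have : (fun ω => G ω A) = fun ω => ENNReal.ofReal ((G ω A).toReal) :=
      funext fun ω => (ENNReal.ofReal_toReal (measure_ne_top _ _)).symm
    rw [this]
    exact ENNReal.measurable_ofReal.comp (hmeas A hA)
  let κ : @ProbabilityTheory.Kernel Ω 𝒳 m _ := ⟨G, hG⟩
  have : ProbabilityTheory.IsMarkovKernel κ := ⟨fun ω => hprob ω⟩
  have hl : Measurable[m] fun ω => ∫⁻ x, ENNReal.ofReal (f x) ∂(G ω) :=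
    Measurable.lintegral_kernel (κ := κ) (ENNReal.measurable_ofReal.comp hf)
  have heq : (fun ω => ∫ x, f x ∂(G ω))
      = fun ω => (∫⁻ x, ENNReal.ofReal (f x) ∂(G ω)).toReal := by
    funext ω
    rw [integral_eq_lintegral_of_nonneg_ae (Filter.Eventually.of_forall hf0)
      hf.aestronglyMeasurable]
  rw [heq]
  exact ENNReal.measurable_toReal.comp hl

lemma meas_le_ofReal_integral {Ω : Type*} {mΩ' : MeasurableSpace Ω} (μP : Measure Ω)
    {A : Set Ω} (hA : MeasurableSet A) {g : Ω → ℝ} (hgm : Measurable g)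
    (hg : Integrable g μP) (hg0 : ∀ ω, 0 ≤ g ω) (h1 : ∀ ω ∈ A, 1 ≤ g ω) :
    μP A ≤ ENNReal.ofReal (∫ ω, g ω ∂μP) := by
  calc μP A = ∫⁻ ω in A, 1 ∂μP := (setLIntegral_one A).symm
    _ ≤ ∫⁻ ω in A, ENNReal.ofReal (g ω) ∂μP := by
        refine setLIntegral_mono (ENNReal.measurable_ofReal.comp hgm) fun ω hω => ?_
        simpa using ENNReal.one_le_ofReal.mpr (h1 ω hω)
    _ ≤ ∫⁻ ω, ENNReal.ofReal (g ω) ∂μP := setLIntegral_le_lintegral A _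
    _ = ENNReal.ofReal (∫ ω, g ω ∂μP) :=
      (ofReal_integral_eq_lintegral_ofReal hg (Filter.Eventually.of_forall hg0)).symm

/-- in the setting of conditionally independent observations with
conditional distributions `G_t`, for every `δ > 0` and `ε ∈ (0,δ)`,
`ℙ(|Σ_t ξ_t h(X_t) − ∫h dG_τ| > δ) ≤ 2 exp(−2ε²/Σ_t ξ_t²) + (δ−ε)⁻¹ Σ_t ξ_t b_t`. -/
theorem stmt7
    {Ω 𝒳 ι : Type*} (m : MeasurableSpace Ω) [mΩ : MeasurableSpace Ω] [MeasurableSpace 𝒳] [StandardBorelSpace 𝒳]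
    [Fintype ι]
    (ℙ : Measure Ω) [IsProbabilityMeasure ℙ]
    (hm : m ≤ mΩ)
    (G : ι → Ω → Measure 𝒳) (Gτ : Ω → Measure 𝒳)
    (hGprob : ∀ t ω, IsProbabilityMeasure (G t ω))
    (hGτprob : ∀ ω, IsProbabilityMeasure (Gτ ω))
    (hGmeas : ∀ t (A : Set 𝒳), MeasurableSet A →
      Measurable[m] fun ω => (G t ω A).toReal)
    (hGτmeas : ∀ (A : Set 𝒳), MeasurableSet A →
      Measurable[m] fun ω => (Gτ ω A).toReal)
    (X : ι → Ω → 𝒳) (hX : ∀ t, Measurable (X t))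
    (hcondindep : ∀ f : ι → 𝒳 → ℝ, (∀ t, Measurable (f t)) →
      (∀ t, ∃ Cf : ℝ, ∀ x, |f t x| ≤ Cf) →
      ℙ[(fun ω => ∏ t : ι, f t (X t ω)) | m]
        =ᵐ[ℙ] fun ω => ∏ t : ι, ∫ x, f t x ∂(G t ω))
    (h : 𝒳 → ℝ) (hh : Measurable h) (h01 : ∀ x, h x ∈ Set.Icc (0 : ℝ) 1)
    (ξ : ι → ℝ) (hξ0 : ∀ t, 0 ≤ ξ t) (hξ1 : ∑ t : ι, ξ t = 1)
    (b : ι → ℝ)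
    (hb : ∀ t, ∫ ω, |∫ x, h x ∂(G t ω) - ∫ x, h x ∂(Gτ ω)| ∂ℙ ≤ b t) :
    ∀ δ ε : ℝ, 0 < ε → ε < δ →
      ℙ {ω | δ < |∑ t : ι, ξ t * h (X t ω) - ∫ x, h x ∂(Gτ ω)|}
        ≤ ENNReal.ofReal
            (2 * Real.exp (-(2 * ε ^ 2) / ∑ t : ι, (ξ t) ^ 2)
              + (δ - ε)⁻¹ * ∑ t : ι, ξ t * b t) := by
  intro δ ε hε hεδ
  -- basic notation
  set S : Ω → ℝ := fun ω => ∑ t : ι, ξ t * h (X t ω) with hS_def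
  set Ih : ι → Ω → ℝ := fun t ω => ∫ x, h x ∂(G t ω) with hIh_def
  set Iτ : Ω → ℝ := fun ω => ∫ x, h x ∂(Gτ ω) with hIτ_def
  set μh : Ω → ℝ := fun ω => ∑ t : ι, ξ t * Ih t ω with hμh_def
  set V : ℝ := ∑ t : ι, (ξ t) ^ 2 with hV_def
  -- V > 0
  obtain ⟨t0, ht0⟩ : ∃ t, ξ t ≠ 0 := by
    by_contra hc
    push_neg at hc
    rw [Finset.sum_eq_zero (fun t _ => hc t)] at hξ1
    exact zero_ne_one hξ1
  have hV : 0 < V :=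
    Finset.sum_pos' (fun t _ => sq_nonneg _) ⟨t0, Finset.mem_univ _, by positivity⟩
  -- measurability
  have hIhm : ∀ t, Measurable[m] (Ih t) := fun t =>
    meas_integral (G t) (hGprob t) (hGmeas t) h hh (fun x => (h01 x).1)
  have hIτm : Measurable[m] Iτ :=
    meas_integral Gτ hGτprob hGτmeas h hh (fun x => (h01 x).1)
  have hμhm : Measurable[m] μh :=
    Finset.measurable_sum _ (fun t _ => (hIhm t).const_mul (ξ t))
  have hSm : Measurable[mΩ] S :=
    Finset.measurable_sum _ (fun t _ => ((hh.comp (hX t)).const_mul (ξ t)))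
  have hSm' : Measurable[mΩ] S := hSm
  -- bounds
  have hIh01 : ∀ t ω, Ih t ω ∈ Set.Icc (0:ℝ) 1 := by
    intro t ω
    haveI := hGprob t ω
    refine ⟨integral_nonneg fun x => (h01 x).1, ?_⟩
    calc ∫ x, h x ∂(G t ω) ≤ ∫ _, (1:ℝ) ∂(G t ω) :=
          integral_mono (integrable_of_bdd hh.aestronglyMeasurable 1 fun x =>
            abs_le.mpr ⟨by linarith [(h01 x).1], (h01 x).2⟩) (integrable_const 1)
            (fun x => (h01 x).2)
      _ = 1 := by simp
  have hIτ01 : ∀ ω, Iτ ω ∈ Set.Icc (0:ℝ) 1 := by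
    intro ω
    haveI := hGτprob ω
    refine ⟨integral_nonneg fun x => (h01 x).1, ?_⟩
    calc ∫ x, h x ∂(Gτ ω) ≤ ∫ _, (1:ℝ) ∂(Gτ ω) :=
          integral_mono (integrable_of_bdd hh.aestronglyMeasurable 1 fun x =>
            abs_le.mpr ⟨by linarith [(h01 x).1], (h01 x).2⟩) (integrable_const 1)
            (fun x => (h01 x).2)
      _ = 1 := by simp
  have hμh01 : ∀ ω, μh ω ∈ Set.Icc (0:ℝ) 1 := by
    intro ω
    constructor
    · exact Finset.sum_nonneg fun t _ => mul_nonneg (hξ0 t) (hIh01 t ω).1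
    · calc ∑ t : ι, ξ t * Ih t ω ≤ ∑ t : ι, ξ t := by
            refine Finset.sum_le_sum fun t _ => ?_
            calc ξ t * Ih t ω ≤ ξ t * 1 :=
                  mul_le_mul_of_nonneg_left (hIh01 t ω).2 (hξ0 t)
              _ = ξ t := mul_one _
        _ = 1 := hξ1
  have hS01 : ∀ ω, S ω ∈ Set.Icc (0:ℝ) 1 := by
    intro ω
    constructor
    · exact Finset.sum_nonneg fun t _ => mul_nonneg (hξ0 t) (h01 _).1
    · calc ∑ t : ι, ξ t * h (X t ω) ≤ ∑ t : ι, ξ t := by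
            refine Finset.sum_le_sum fun t _ => ?_
            calc ξ t * h (X t ω) ≤ ξ t * 1 :=
                  mul_le_mul_of_nonneg_left (h01 _).2 (hξ0 t)
              _ = ξ t := mul_one _
        _ = 1 := hξ1
  -- MGF bound
  have hmgf : ∀ r : ℝ, ∫ ω, Real.exp (r * (S ω - μh ω)) ∂ℙ ≤ Real.exp (r ^ 2 * V / 8) := by
    intro r
    set f : ι → 𝒳 → ℝ := fun t x => Real.exp (r * (ξ t * h x)) with hf_def
    have hfmeas : ∀ t, Measurable (f t) := fun t => by fun_prop
    have hfbdd : ∀ t, ∃ C : ℝ, ∀ x, |f t x| ≤ C := by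
      intro t
      refine ⟨Real.exp |r * ξ t|, fun x => ?_⟩
      rw [abs_of_nonneg (Real.exp_pos _).le, Real.exp_le_exp]
      calc r * (ξ t * h x) = (r * ξ t) * h x := by ring
        _ ≤ |r * ξ t| * 1 :=
            mul_le_mul (le_abs_self _) (h01 x).2 (h01 x).1 (abs_nonneg _)
        _ = |r * ξ t| := mul_one _
    have hcond := hcondindep f hfmeas hfbdd
    have heqS : (fun ω => ∏ t : ι, f t (X t ω)) = fun ω => Real.exp (r * S ω) := by
      funext ω
      rw [hS_def, Finset.mul_sum, Real.exp_sum]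
    rw [heqS] at hcond
    set W : Ω → ℝ := fun ω => Real.exp (-(r * μh ω)) with hW_def
    have hWm : Measurable[m] W := Real.measurable_exp.comp (hμhm.const_mul r).neg
    have hWsm : StronglyMeasurable[m] W := hWm.stronglyMeasurable
    have hWbdd : ∀ ω, |W ω| ≤ Real.exp |r| := by
      intro ω
      rw [abs_of_nonneg (Real.exp_pos _).le, Real.exp_le_exp]
      have h1 := (hμh01 ω).1
      have h2 := (hμh01 ω).2
      calc -(r * μh ω) ≤ |r * μh ω| := neg_le_abs _
        _ = |r| * |μh ω| := abs_mul _ _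
        _ ≤ |r| * 1 := by
            refine mul_le_mul_of_nonneg_left ?_ (abs_nonneg r)
            rw [abs_of_nonneg h1]; exact h2
        _ = |r| := mul_one _
    have hexpSm : Measurable[mΩ] fun ω => Real.exp (r * S ω) :=
      Real.measurable_exp.comp (hSm'.const_mul r)
    have hexpSbdd : ∀ ω, |Real.exp (r * S ω)| ≤ Real.exp |r| := by
      intro ω
      rw [abs_of_nonneg (Real.exp_pos _).le, Real.exp_le_exp]
      have h1 := (hS01 ω).1
      have h2 := (hS01 ω).2
      calc r * S ω ≤ |r * S ω| := le_abs_self _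
        _ = |r| * |S ω| := abs_mul _ _
        _ ≤ |r| * 1 := by
            refine mul_le_mul_of_nonneg_left ?_ (abs_nonneg r)
            rw [abs_of_nonneg h1]; exact h2
        _ = |r| := mul_one _
    have hexpSint : Integrable (fun ω => Real.exp (r * S ω)) ℙ :=
      integrable_of_bdd hexpSm.aestronglyMeasurable _ hexpSbdd
    have hWexpSint : Integrable (W * fun ω => Real.exp (r * S ω)) ℙ := by
      refine integrable_of_bdd (((hWm.mono hm le_rfl).mul hexpSm).aestronglyMeasurable)
        (Real.exp |r| * Real.exp |r|) (fun ω => ?_)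
      rw [Pi.mul_apply, abs_mul]
      exact mul_le_mul (hWbdd ω) (hexpSbdd ω) (abs_nonneg _) (Real.exp_pos _).le
    have hmul := condExp_mul_of_stronglyMeasurable_left hWsm hWexpSint hexpSint
    -- rewrite the integrand
    have heq2 : (fun ω => Real.exp (r * (S ω - μh ω))) = W * fun ω => Real.exp (r * S ω) := by
      funext ω
      rw [Pi.mul_apply, hW_def, ← Real.exp_add]
      ring_nf
    rw [heq2]
    set F : Ω → ℝ := fun ω => ∏ t : ι, ∫ x, f t x ∂(G t ω) with hF_def
    -- pointwise bound on W * F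
    have hWF : ∀ ω, W ω * F ω ≤ Real.exp (r ^ 2 * V / 8) := by
      intro ω
      have hsum : -(r * μh ω) = ∑ t : ι, -(r * (ξ t * Ih t ω)) := by
        simp [hμh_def, Finset.mul_sum]
      have hWprod : W ω = ∏ t : ι, Real.exp (-(r * (ξ t * Ih t ω))) := by
        simp only [hW_def]
        rw [hsum, Real.exp_sum]
      have hfactor : ∀ t, (∫ x, f t x ∂(G t ω))
          ≤ Real.exp (r * (ξ t * Ih t ω) + r ^ 2 * (ξ t) ^ 2 / 8) := by
        intro t
        haveI := hGprob t ω
        have := hoeff_meas (G t ω) (fun x => ξ t * h x) (hh.const_mul (ξ t)) (ξ t)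
          (fun x => mul_nonneg (hξ0 t) (h01 x).1)
          (fun x => by
            calc ξ t * h x ≤ ξ t * 1 := mul_le_mul_of_nonneg_left (h01 x).2 (hξ0 t)
              _ = ξ t := mul_one _) r
        rw [integral_const_mul] at this
        exact this
      calc W ω * F ω
          = ∏ t : ι, (Real.exp (-(r * (ξ t * Ih t ω))) * ∫ x, f t x ∂(G t ω)) := by
            rw [hWprod, hF_def, ← Finset.prod_mul_distrib]
        _ ≤ ∏ t : ι, Real.exp (r ^ 2 * (ξ t) ^ 2 / 8) := by
            refine Finset.prod_le_prod (fun t _ => ?_) (fun t _ => ?_)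
            · exact mul_nonneg (Real.exp_pos _).le
                (integral_nonneg fun x => (Real.exp_pos _).le)
            · calc Real.exp (-(r * (ξ t * Ih t ω))) * ∫ x, f t x ∂(G t ω)
                  ≤ Real.exp (-(r * (ξ t * Ih t ω)))
                      * Real.exp (r * (ξ t * Ih t ω) + r ^ 2 * (ξ t) ^ 2 / 8) :=
                    mul_le_mul_of_nonneg_left (hfactor t) (Real.exp_pos _).le
                _ = Real.exp (r ^ 2 * (ξ t) ^ 2 / 8) := by
                    rw [← Real.exp_add]; ring_nf
        _ = Real.exp (r ^ 2 * V / 8) := by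
            rw [← Real.exp_sum]
            congr 1
            rw [hV_def, Finset.mul_sum, ← Finset.sum_div]
    have hWF0 : ∀ ω, 0 ≤ W ω * F ω := fun ω =>
      mul_nonneg (Real.exp_pos _).le
        (Finset.prod_nonneg fun t _ => integral_nonneg fun x => (Real.exp_pos _).le)
    calc ∫ ω, (W * fun ω => Real.exp (r * S ω)) ω ∂ℙ
        = ∫ ω, (ℙ[W * fun ω => Real.exp (r * S ω)|m]) ω ∂ℙ :=
          (integral_condExp hm).symm
      _ = ∫ ω, W ω * F ω ∂ℙ := by
          refine integral_congr_ae (hmul.trans ?_)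
          filter_upwards [hcond] with ω hω
          rw [Pi.mul_apply, hω]
      _ ≤ ∫ _, Real.exp (r ^ 2 * V / 8) ∂ℙ :=
          integral_mono_of_nonneg (Filter.Eventually.of_forall hWF0) (integrable_const _)
            (Filter.Eventually.of_forall hWF)
      _ = Real.exp (r ^ 2 * V / 8) := by simp
  -- one-sided Chernoff bounds
  have hside : ∀ c : ℝ, c = 1 ∨ c = -1 →
      ℙ {ω | ε < c * (S ω - μh ω)} ≤ ENNReal.ofReal (Real.exp (-(2 * ε ^ 2) / V)) := by
    intro c hc
    set r : ℝ := 4 * ε / V with hr_def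
    have hr : 0 < r := by positivity
    have hc2 : c ^ 2 = 1 := by rcases hc with hc | hc <;> rw [hc] <;> norm_num
    set g : Ω → ℝ := fun ω => Real.exp (-(r * ε)) * Real.exp ((c * r) * (S ω - μh ω))
      with hg_def
    have hμhm' : Measurable[mΩ] μh := hμhm.mono hm le_rfl
    have hgm : Measurable[mΩ] g :=
      ((Real.measurable_exp.comp ((hSm'.sub hμhm').const_mul (c * r))).const_mul _)
    have hgbdd : ∀ ω, |g ω| ≤ Real.exp (-(r * ε)) * Real.exp (|c * r|) := by
      intro ω
      rw [hg_def, abs_mul, abs_of_nonneg (Real.exp_pos _).le,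
        abs_of_nonneg (Real.exp_pos _).le]
      refine mul_le_mul_of_nonneg_left ?_ (Real.exp_pos _).le
      rw [Real.exp_le_exp]
      have hd1 : |S ω - μh ω| ≤ 1 := by
        have h1 := (hS01 ω).1; have h2 := (hS01 ω).2
        have h3 := (hμh01 ω).1; have h4 := (hμh01 ω).2
        rw [abs_le]; constructor <;> linarith
      calc (c * r) * (S ω - μh ω) ≤ |(c * r) * (S ω - μh ω)| := le_abs_self _
        _ = |c * r| * |S ω - μh ω| := abs_mul _ _
        _ ≤ |c * r| * 1 := mul_le_mul_of_nonneg_left hd1 (abs_nonneg _)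
        _ = |c * r| := mul_one _
    have hgint : Integrable g ℙ := integrable_of_bdd hgm.aestronglyMeasurable _ hgbdd
    have hA : MeasurableSet[mΩ] {ω | ε < c * (S ω - μh ω)} :=
      measurableSet_lt (@measurable_const ℝ Ω _ mΩ ε) ((hSm'.sub hμhm').const_mul c)
    have h1 : ∀ ω ∈ {ω | ε < c * (S ω - μh ω)}, 1 ≤ g ω := by
      intro ω hω
      have hω' : ε < c * (S ω - μh ω) := hω
      have : r * ε < r * (c * (S ω - μh ω)) := by
        exact mul_lt_mul_of_pos_left hω' hr
      have hexp : Real.exp (r * ε) ≤ Real.exp ((c * r) * (S ω - μh ω)) := by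
        rw [Real.exp_le_exp]
        nlinarith
      calc (1:ℝ) = Real.exp (-(r * ε)) * Real.exp (r * ε) := by
            rw [← Real.exp_add]; simp
        _ ≤ g ω := mul_le_mul_of_nonneg_left hexp (Real.exp_pos _).le
    have hbound := meas_le_ofReal_integral ℙ hA hgm hgint
      (fun ω => mul_nonneg (Real.exp_pos _).le (Real.exp_pos _).le) h1
    refine hbound.trans (ENNReal.ofReal_le_ofReal ?_)
    calc ∫ ω, g ω ∂ℙ
        = Real.exp (-(r * ε)) * ∫ ω, Real.exp ((c * r) * (S ω - μh ω)) ∂ℙ := by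
          rw [hg_def, integral_const_mul]
      _ ≤ Real.exp (-(r * ε)) * Real.exp ((c * r) ^ 2 * V / 8) :=
          mul_le_mul_of_nonneg_left (hmgf (c * r)) (Real.exp_pos _).le
      _ = Real.exp (-(r * ε) + (c * r) ^ 2 * V / 8) := (Real.exp_add _ _).symm
      _ = Real.exp (-(2 * ε ^ 2) / V) := by
          congr 1
          have : (c * r) ^ 2 = r ^ 2 := by rw [mul_pow, hc2, one_mul]
          rw [this, hr_def]
          field_simp
          ring
  -- Markov bound
  have hYm : Measurable[mΩ] (fun ω => μh ω - Iτ ω) :=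
    (hμhm.mono hm le_rfl).sub (hIτm.mono hm le_rfl)
  have hmarkov : ℙ {ω | δ - ε < |μh ω - Iτ ω|}
      ≤ ENNReal.ofReal ((δ - ε)⁻¹ * ∑ t : ι, ξ t * b t) := by
    have hδε : 0 < δ - ε := by linarith
    set g : Ω → ℝ := fun ω => (δ - ε)⁻¹ * |μh ω - Iτ ω| with hg_def
    have hgm : Measurable[mΩ] g := (measurable_abs.comp hYm).const_mul _
    have hgbdd : ∀ ω, |g ω| ≤ (δ - ε)⁻¹ * 2 := by
      intro ω
      rw [hg_def, abs_mul, abs_abs, abs_of_nonneg (by positivity : (0:ℝ) ≤ (δ - ε)⁻¹)]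
      refine mul_le_mul_of_nonneg_left ?_ (by positivity)
      have h1 := (hμh01 ω).1; have h2 := (hμh01 ω).2
      have h3 := (hIτ01 ω).1; have h4 := (hIτ01 ω).2
      rw [abs_le]; constructor <;> linarith
    have hgint : Integrable g ℙ := integrable_of_bdd hgm.aestronglyMeasurable _ hgbdd
    have hA : MeasurableSet[mΩ] {ω | δ - ε < |μh ω - Iτ ω|} :=
      measurableSet_lt (@measurable_const ℝ Ω _ mΩ (δ - ε)) (measurable_abs.comp hYm)
    have h1 : ∀ ω ∈ {ω | δ - ε < |μh ω - Iτ ω|}, 1 ≤ g ω := by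
      intro ω hω
      have hω' : δ - ε < |μh ω - Iτ ω| := hω
      simp only [hg_def]
      calc (1:ℝ) = (δ - ε)⁻¹ * (δ - ε) := (inv_mul_cancel₀ hδε.ne').symm
        _ ≤ (δ - ε)⁻¹ * |μh ω - Iτ ω| :=
          mul_le_mul_of_nonneg_left hω'.le (by positivity)
    have hbound := meas_le_ofReal_integral ℙ hA hgm hgint
      (fun ω => mul_nonneg (by positivity) (abs_nonneg _)) h1
    refine hbound.trans (ENNReal.ofReal_le_ofReal ?_)
    rw [hg_def, integral_const_mul]
    refine mul_le_mul_of_nonneg_left ?_ (by positivity)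
    -- ∫ |μh - Iτ| ≤ ∑ ξ t * b t
    have hdint : ∀ t, Integrable (fun ω => |Ih t ω - Iτ ω|) ℙ := by
      intro t
      refine integrable_of_bdd (Measurable.aestronglyMeasurable ?_) 2 (fun ω => ?_)
      · exact measurable_abs.comp (((hIhm t).mono hm le_rfl).sub (hIτm.mono hm le_rfl))
      · have h1 := (hIh01 t ω).1; have h2 := (hIh01 t ω).2
        have h3 := (hIτ01 ω).1; have h4 := (hIτ01 ω).2
        rw [abs_abs]
        rw [abs_le]; constructor <;> linarith
    have hpt : ∀ ω, |μh ω - Iτ ω| ≤ ∑ t : ι, ξ t * |Ih t ω - Iτ ω| := by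
      intro ω
      have hrw : μh ω - Iτ ω = ∑ t : ι, ξ t * (Ih t ω - Iτ ω) := by
        rw [hμh_def]
        rw [Finset.sum_congr rfl (fun t _ => mul_sub (ξ t) (Ih t ω) (Iτ ω)),
          Finset.sum_sub_distrib, ← Finset.sum_mul, hξ1, one_mul]
      rw [hrw]
      calc |∑ t : ι, ξ t * (Ih t ω - Iτ ω)| ≤ ∑ t : ι, |ξ t * (Ih t ω - Iτ ω)| :=
            Finset.abs_sum_le_sum_abs _ _
        _ = ∑ t : ι, ξ t * |Ih t ω - Iτ ω| := by
            refine Finset.sum_congr rfl fun t _ => ?_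
            rw [abs_mul, abs_of_nonneg (hξ0 t)]
    calc ∫ ω, |μh ω - Iτ ω| ∂ℙ
        ≤ ∫ ω, ∑ t : ι, ξ t * |Ih t ω - Iτ ω| ∂ℙ := by
          refine integral_mono ?_ ?_ hpt
          · exact integrable_of_bdd (measurable_abs.comp hYm).aestronglyMeasurable 2 (fun ω => by
              have h1 := (hμh01 ω).1; have h2 := (hμh01 ω).2
              have h3 := (hIτ01 ω).1; have h4 := (hIτ01 ω).2
              rw [abs_abs, abs_le]; constructor <;> linarith)
          · exact integrable_finset_sum _ (fun t _ => (hdint t).const_mul _)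
      _ = ∑ t : ι, ξ t * ∫ ω, |Ih t ω - Iτ ω| ∂ℙ := by
          rw [integral_finset_sum _ (fun t _ => (hdint t).const_mul _)]
          exact Finset.sum_congr rfl fun t _ => integral_const_mul _ _
      _ ≤ ∑ t : ι, ξ t * b t :=
          Finset.sum_le_sum fun t _ => mul_le_mul_of_nonneg_left (hb t) (hξ0 t)
  -- combine
  have hincl : {ω | δ < |S ω - Iτ ω|}
      ⊆ {ω | ε < S ω - μh ω} ∪ {ω | ε < -(S ω - μh ω)} ∪ {ω | δ - ε < |μh ω - Iτ ω|} := by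
    intro ω hω
    have hω' : δ < |S ω - Iτ ω| := hω
    by_contra hc
    simp only [Set.mem_union, Set.mem_setOf_eq, not_or, not_lt] at hc
    obtain ⟨⟨hc1, hc2⟩, hc3⟩ := hc
    have habs : |S ω - μh ω| ≤ ε := abs_le.mpr ⟨by linarith, hc1⟩
    have : |S ω - Iτ ω| ≤ |S ω - μh ω| + |μh ω - Iτ ω| := by
      calc |S ω - Iτ ω| = |(S ω - μh ω) + (μh ω - Iτ ω)| := by ring_nf
        _ ≤ _ := abs_add_le _ _
    linarith
  have hμhm' : Measurable[mΩ] μh := hμhm.mono hm le_rfl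
  have hexp_nonneg : (0:ℝ) ≤ Real.exp (-(2 * ε ^ 2) / V) := (Real.exp_pos _).le
  have hc1 := hside 1 (Or.inl rfl)
  have hc2 := hside (-1) (Or.inr rfl)
  simp only [one_mul] at hc1
  have hc2' : ℙ {ω | ε < -(S ω - μh ω)} ≤ ENNReal.ofReal (Real.exp (-(2 * ε ^ 2) / V)) := by
    have : {ω | ε < -(S ω - μh ω)} = {ω | ε < (-1 : ℝ) * (S ω - μh ω)} := by
      simp only [neg_mul, one_mul]
    rw [this]
    exact hc2
  calc ℙ {ω | δ < |S ω - Iτ ω|}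
      ≤ ℙ ({ω | ε < S ω - μh ω} ∪ {ω | ε < -(S ω - μh ω)} ∪ {ω | δ - ε < |μh ω - Iτ ω|}) :=
        measure_mono hincl
    _ ≤ ℙ ({ω | ε < S ω - μh ω} ∪ {ω | ε < -(S ω - μh ω)})
        + ℙ {ω | δ - ε < |μh ω - Iτ ω|} := measure_union_le _ _
    _ ≤ ℙ {ω | ε < S ω - μh ω} + ℙ {ω | ε < -(S ω - μh ω)}
        + ℙ {ω | δ - ε < |μh ω - Iτ ω|} := by
        gcongr
        exact measure_union_le _ _
    _ ≤ ENNReal.ofReal (Real.exp (-(2 * ε ^ 2) / V))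
        + ENNReal.ofReal (Real.exp (-(2 * ε ^ 2) / V))
        + ENNReal.ofReal ((δ - ε)⁻¹ * ∑ t : ι, ξ t * b t) := by
        gcongr
    _ = ENNReal.ofReal
        (2 * Real.exp (-(2 * ε ^ 2) / V) + (δ - ε)⁻¹ * ∑ t : ι, ξ t * b t) := by
        rw [← ENNReal.ofReal_add hexp_nonneg hexp_nonneg,
          ← ENNReal.ofReal_add (by linarith) ?_]
        · congr 1; ring
        · have hδε : 0 < δ - ε := by linarith
          have hsum : 0 ≤ ∑ t : ι, ξ t * b t := by
            refine Finset.sum_nonneg fun t _ => mul_nonneg (hξ0 t) ?_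
            refine le_trans ?_ (hb t)
            exact integral_nonneg fun ω => abs_nonneg _
          positivity
end

section
/- Let X = (X_t)_{t∈𝒯} be a stochastic process with values in a standard Borel space (𝒳, Σ) that is locally exchangeable with respect to a premetric d, let T ⊆ 𝒯 be a finite set, let 𝒢 be a subgroup of the group of bijections π : T → T, let S : 𝒳^T → ℝ be measurable, and let α ∈ [0,1]. Then ℙ( (1/|𝒢|) Σ_{π∈𝒢} 1[S(X_T) > S(X_{π,T})] − (1/|𝒢|) Σ_{π∈𝒢} Σ_{t∈T} d(t, π(t)) > 1 − α ) ≤ α, where X_T = (X_t)_{t∈T} and X_{π,T} = (X_{π(t)})_{t∈T}. -/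
/-!
Fix `ω` and put `v π = S (X_{π,T} ω)`. Because `G` is closed under products and inverses, the
number of `σ ∈ G` with `S (X_{πσ,T} ω) < S (X_{π,T} ω)` is the number of `τ ∈ G` with
`v τ < v π`; the lowest `π` for which this exceeds `θ` has every other such `π` above it, so at
most `|G| - θ` elements `π` of `G` have count above `θ`. Taking expectations,
`∑_{π ∈ G} ℙ(count(X_{π,T}) > θ) ≤ |G| - θ`, and local exchangeability replaces each term by
`ℙ(count(X_T) > θ)` at a total variation cost of `∑_{t ∈ T} d(t, π t)`. The choice
`θ = (1 - α)|G| + ∑_{π ∈ G} ∑_{t ∈ T} d(t, π t)` then gives the bound `α`; if `θ > |G|` the event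
is empty.
-/

open MeasureTheory

theorem measureReal_le_add_tvDist {𝒴 : Type*} [MeasurableSpace 𝒴] (μ ν : Measure 𝒴)
    [IsFiniteMeasure μ] [IsFiniteMeasure ν] {A : Set 𝒴} (hA : MeasurableSet A) :
    μ.real A ≤ ν.real A + tvDist μ ν := by
  have hbdd : BddAbove (Set.range fun B : {B : Set 𝒴 // MeasurableSet B} =>
      |(μ B.1).toReal - (ν B.1).toReal|) := by
    refine ⟨μ.real .univ + ν.real .univ, ?_⟩
    rintro _ ⟨B, rfl⟩
    exact abs_sub_le_of_nonneg_of_le measureReal_nonneg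
      (le_add_of_le_of_nonneg (measureReal_mono (Set.subset_univ _)) measureReal_nonneg)
      measureReal_nonneg
      (le_add_of_nonneg_of_le measureReal_nonneg (measureReal_mono (Set.subset_univ _)))
  have := (le_abs_self _).trans (le_ciSup hbdd ⟨A, hA⟩)
  simp only [measureReal_def] at this ⊢
  unfold tvDist
  linarith

theorem sum_measureReal_le_of_forall_sum_indicator_le {Ω ι : Type*} [MeasurableSpace Ω]
    (μ : Measure Ω) [IsProbabilityMeasure μ] (s : Finset ι) {A : ι → Set Ω}
    (hA : ∀ i ∈ s, MeasurableSet (A i)) {m : ℝ} (hm : ∀ ω, ∑ i ∈ s, (A i).indicator 1 ω ≤ m) :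
    ∑ i ∈ s, μ.real (A i) ≤ m := by
  have hint : ∀ i ∈ s, Integrable ((A i).indicator (1 : Ω → ℝ)) μ :=
    fun i hi => (integrable_const 1).indicator (hA i hi)
  calc ∑ i ∈ s, μ.real (A i) = ∫ ω, ∑ i ∈ s, (A i).indicator 1 ω ∂μ := by
        rw [integral_finsetSum s hint]
        exact Finset.sum_congr rfl fun i hi => (integral_indicator_one (hA i hi)).symm
    _ ≤ ∫ _, m ∂μ := integral_mono (integrable_finsetSum s hint) (integrable_const m) hm
    _ = m := by simp

theorem Finset.card_filter_mul_left {G : Type*} [Group G] {s : Finset G}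
    (hmul : ∀ a ∈ s, ∀ b ∈ s, a * b ∈ s) (hinv : ∀ a ∈ s, a⁻¹ ∈ s) {a : G} (ha : a ∈ s)
    (p : G → Prop) [DecidablePred p] :
    (s.filter fun b => p (a * b)).card = (s.filter p).card := by
  refine Finset.card_nbij' (a * ·) (a⁻¹ * ·) ?_ ?_ ?_ ?_
  · intro b hb
    simp only [Finset.mem_coe, Finset.mem_filter] at hb ⊢
    exact ⟨hmul a ha b hb.1, hb.2⟩
  · intro b hb
    simp only [Finset.mem_coe, Finset.mem_filter, mul_inv_cancel_left] at hb ⊢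
    exact ⟨hmul _ (hinv a ha) b hb.1, hb.2⟩
  · intro b _; simp
  · intro b _; simp

/-- The lowest element with more than `θ` elements below it has all the others above it. -/
theorem Finset.card_filter_lt_card_filter_lt_add_le {α β : Type*} [LinearOrder β] (s : Finset α)
    (v : α → β) {θ : ℝ} (hθ : θ ≤ s.card) :
    ((s.filter fun a => θ < (s.filter fun b => v b < v a).card).card : ℝ) + θ ≤ s.card := by
  classical
  set K := s.filter fun a => θ < (s.filter fun b => v b < v a).card with hKdef
  have hKs : K ⊆ s := Finset.filter_subset _ s
  clear_value K
  rcases K.eq_empty_or_nonempty with hK | hK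
  · simpa [hK] using hθ
  obtain ⟨a, haK, hmin⟩ := K.exists_min_image v hK
  have hθa : θ < (s.filter fun b => v b < v a).card := by
    rw [hKdef, Finset.mem_filter] at haK; exact haK.2
  have hbelow : s.filter (fun b => v b < v a) ⊆ s \ K := fun b hb => by
    rw [Finset.mem_filter] at hb
    exact Finset.mem_sdiff.mpr ⟨hb.1, fun hbK => (hmin b hbK).not_gt hb.2⟩
  have hcard : (s.filter fun b => v b < v a).card + K.card ≤ s.card := by
    have := Finset.card_sdiff_add_card_eq_card hKs
    have := Finset.card_le_card hbelow
    omega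
  have : ((s.filter fun b => v b < v a).card : ℝ) + K.card ≤ s.card := by exact_mod_cast hcard
  linarith

theorem Finset.card_filter_lt_card_filter_mul_lt_add_le {G β : Type*} [Group G] [LinearOrder β]
    {s : Finset G} (hmul : ∀ a ∈ s, ∀ b ∈ s, a * b ∈ s) (hinv : ∀ a ∈ s, a⁻¹ ∈ s)
    (v : G → β) {θ : ℝ} (hθ : θ ≤ s.card) :
    ((s.filter fun a => θ < (s.filter fun b => v (a * b) < v a).card).card : ℝ) + θ ≤ s.card := by
  have hshift : s.filter (fun a => θ < (s.filter fun b => v (a * b) < v a).card) =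
      s.filter fun a => θ < (s.filter fun b => v b < v a).card :=
    Finset.filter_congr fun a ha => by
      rw [Finset.card_filter_mul_left hmul hinv ha (fun b => v b < v a)]
  rw [hshift]
  exact Finset.card_filter_lt_card_filter_lt_add_le s v hθ

section LocallyExchangeable

variable {Ω 𝒳 𝒯 : Type*} [MeasurableSpace Ω] [MeasurableSpace 𝒳]

def IsLocallyExchangeable (ℙ : Measure Ω) (X : 𝒯 → Ω → 𝒳) (d : 𝒯 → 𝒯 → ℝ) : Prop :=
  ∀ (T : Finset 𝒯) (π : 𝒯 → 𝒯), Set.InjOn π ↑T →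
    tvDist (Measure.map (fun ω => fun t : T => X t.1 ω) ℙ)
      (Measure.map (fun ω => fun t : T => X (π t.1) ω) ℙ) ≤ ∑ t ∈ T, d t (π t)

variable {ℙ : Measure Ω} {X : 𝒯 → Ω → 𝒳} {d : 𝒯 → 𝒯 → ℝ}

theorem IsLocallyExchangeable.tvDist_map_perm_le (hexch : IsLocallyExchangeable ℙ X d)
    (T : Finset 𝒯) (π : Equiv.Perm T) :
    tvDist (Measure.map (fun ω => fun t : T => X t.1 ω) ℙ)
      (Measure.map (fun ω => fun t : T => X (π t).1 ω) ℙ) ≤ ∑ t : T, d t.1 (π t).1 := by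
  classical
  have h := hexch T (Equiv.Perm.ofSubtype π) (Equiv.Perm.ofSubtype π).injective.injOn
  rw [← Finset.sum_coe_sort T] at h
  simpa only [Equiv.Perm.ofSubtype_apply_coe] using h

theorem IsLocallyExchangeable.card_mul_measureReal_le [IsProbabilityMeasure ℙ]
    (hexch : IsLocallyExchangeable ℙ X d) (hX : ∀ t, Measurable (X t)) {T : Finset 𝒯}
    (G : Finset (Equiv.Perm T)) {B : Set (T → 𝒳)} [DecidablePred (· ∈ B)]
    (hB : MeasurableSet B) {m : ℝ}
    (hm : ∀ ω, ((G.filter fun π => (fun t => X (π t).1 ω) ∈ B).card : ℝ) ≤ m) :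
    G.card * ℙ.real {ω | (fun t : T => X t.1 ω) ∈ B} ≤ m + ∑ π ∈ G, ∑ t : T, d t.1 (π t).1 := by
  have hmeas : ∀ π : Equiv.Perm T, Measurable fun ω => fun t : T => X (π t).1 ω :=
    fun π => measurable_pi_lambda _ fun t => hX _
  have hcompare : ∀ π : Equiv.Perm T, ℙ.real {ω | (fun t : T => X t.1 ω) ∈ B} ≤
      ℙ.real {ω | (fun t => X (π t).1 ω) ∈ B} + ∑ t : T, d t.1 (π t).1 := fun π => by
    have := measureReal_le_add_tvDist _ _ hB |>.trans
      (add_le_add_right (hexch.tvDist_map_perm_le T π) _)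
    rwa [map_measureReal_apply (measurable_pi_lambda _ fun t => hX _) hB,
      map_measureReal_apply (hmeas π) hB] at this
  calc G.card * ℙ.real {ω | (fun t : T => X t.1 ω) ∈ B}
      = ∑ π ∈ G, ℙ.real {ω | (fun t : T => X t.1 ω) ∈ B} := by simp
    _ ≤ ∑ π ∈ G, (ℙ.real {ω | (fun t => X (π t).1 ω) ∈ B} + ∑ t : T, d t.1 (π t).1) :=
        Finset.sum_le_sum fun π _ => hcompare π
    _ ≤ m + ∑ π ∈ G, ∑ t : T, d t.1 (π t).1 := by
        rw [Finset.sum_add_distrib]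
        gcongr
        refine sum_measureReal_le_of_forall_sum_indicator_le ℙ G (fun π _ => hmeas π hB) fun ω => ?_
        refine le_of_eq_of_le ?_ (hm ω)
        classical
        rw [Finset.sum_indicator_eq_sum_filter]
        simp

end LocallyExchangeable

section RandomizationTest

variable {T 𝒳 : Type*} (G : Finset (Equiv.Perm T)) (S : (T → 𝒳) → ℝ)

noncomputable def permRank (y : T → 𝒳) : ℕ :=
  (G.filter fun σ => S (fun t => y (σ t)) < S y).card

theorem permRank_le_card (y : T → 𝒳) : permRank G S y ≤ G.card :=
  Finset.card_filter_le _ _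

theorem measurable_permRank [MeasurableSpace 𝒳] (hS : Measurable S) :
    Measurable fun y => (permRank G S y : ℝ) := by
  simp only [permRank, ← Finset.sum_boole]
  exact Finset.measurable_sum _ fun σ _ => Measurable.ite
    (measurableSet_lt (hS.comp (measurable_pi_lambda _ fun t => measurable_pi_apply _)) hS)
    measurable_const measurable_const

theorem card_filter_lt_permRank_add_le (hmul : ∀ π ∈ G, ∀ π' ∈ G, π * π' ∈ G)
    (hinv : ∀ π ∈ G, π⁻¹ ∈ G) (x : T → 𝒳) {θ : ℝ} (hθ : θ ≤ G.card) :
    ((G.filter fun π => θ < permRank G S (fun t => x (π t))).card : ℝ) + θ ≤ G.card :=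
  Finset.card_filter_lt_card_filter_mul_lt_add_le hmul hinv (fun π => S fun t => x (π t)) hθ

end RandomizationTest

theorem stmt10_general
    {Ω 𝒳 𝒯 : Type*} [MeasurableSpace Ω] [MeasurableSpace 𝒳]
    (ℙ : Measure Ω) [IsProbabilityMeasure ℙ]
    (X : 𝒯 → Ω → 𝒳) (hX : ∀ t, Measurable (X t))
    (d : 𝒯 → 𝒯 → ℝ)
    (hexch : ∀ (T : Finset 𝒯) (π : 𝒯 → 𝒯), Set.InjOn π ↑T →
      tvDist (Measure.map (fun ω => fun t : T => X t.1 ω) ℙ)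
             (Measure.map (fun ω => fun t : T => X (π t.1) ω) ℙ)
        ≤ ∑ t ∈ T, d t (π t))
    (T : Finset 𝒯)
    (G : Finset (Equiv.Perm {x // x ∈ T}))
    (hGone : 1 ∈ G) (hGmul : ∀ π ∈ G, ∀ π' ∈ G, π * π' ∈ G)
    (hGinv : ∀ π ∈ G, π⁻¹ ∈ G)
    (S : ({x // x ∈ T} → 𝒳) → ℝ) (hS : Measurable S)
    (α : ℝ) :
    ℙ {ω | 1 - α <
        (G.card : ℝ)⁻¹ * ∑ π ∈ G,
            (if S (fun t => X (π t).1 ω) < S (fun t => X t.1 ω) then (1 : ℝ) else 0)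
          - (G.card : ℝ)⁻¹ * ∑ π ∈ G, ∑ t : {x // x ∈ T}, d t.1 (π t).1}
      ≤ ENNReal.ofReal α := by
  classical
  have hn : (0 : ℝ) < G.card := by exact_mod_cast Finset.card_pos.mpr ⟨1, hGone⟩
  set D := ∑ π ∈ G, ∑ t : T, d t.1 (π t).1
  set θ := (1 - α) * G.card + D
  set B := {y | θ < (permRank G S y : ℝ)}
  have hevent : {ω | 1 - α <
        (G.card : ℝ)⁻¹ * ∑ π ∈ G,
            (if S (fun t => X (π t).1 ω) < S (fun t => X t.1 ω) then (1 : ℝ) else 0)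
          - (G.card : ℝ)⁻¹ * D} ⊆ {ω | (fun t => X t.1 ω) ∈ B} := fun ω hω => by
    simp only [Set.mem_ofPred_eq, Finset.sum_boole, ← mul_sub, lt_inv_mul_iff₀ hn] at hω
    show θ < ((G.filter fun σ => S (fun t => X (σ t).1 ω) < S fun t => X t.1 ω).card : ℝ)
    linarith
  refine (measure_mono hevent).trans ?_
  rcases le_or_gt θ G.card with hθ | hθ
  · have := IsLocallyExchangeable.card_mul_measureReal_le hexch hX G
      (measurableSet_lt measurable_const (measurable_permRank G S hS)) fun ω =>
        le_sub_iff_add_le.mpr (card_filter_lt_permRank_add_le G S hGmul hGinv (X · ω) hθ)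
    rw [← ofReal_measureReal]
    refine ENNReal.ofReal_le_ofReal (le_of_mul_le_mul_left ?_ hn)
    linarith
  · have hB : B = ∅ := Set.eq_empty_of_forall_notMem fun y hy =>
      (hy.trans_le (by exact_mod_cast permRank_le_card G S y)).not_gt hθ
    simp [hB]

/-- local randomization test: if `X` is locally exchangeable w.r.t.
the premetric `d`, `T ⊆ 𝒯` is finite, `𝒢` is a subgroup of the bijections of `T`,
and `S` is a measurable test statistic, then for `α ∈ [0,1]`,
`ℙ( (1/|𝒢|) Σ_{π∈𝒢} 1[S(X_T) > S(X_{π,T})] − (1/|𝒢|) Σ_{π∈𝒢} Σ_{t∈T} d(t,π(t)) > 1−α ) ≤ α`. -/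
theorem stmt10
    {Ω 𝒳 𝒯 : Type*} [MeasurableSpace Ω] [MeasurableSpace 𝒳] [StandardBorelSpace 𝒳]
    (ℙ : Measure Ω) [IsProbabilityMeasure ℙ]
    (X : 𝒯 → Ω → 𝒳) (hX : ∀ t, Measurable (X t))
    (d : 𝒯 → 𝒯 → ℝ)
    (hd0 : ∀ t t', 0 ≤ d t t') (hd1 : ∀ t t', d t t' ≤ 1)
    (hdsymm : ∀ t t', d t t' = d t' t) (hdrefl : ∀ t, d t t = 0)
    (hexch : ∀ (T : Finset 𝒯) (π : 𝒯 → 𝒯), Set.InjOn π ↑T →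
      tvDist (Measure.map (fun ω => fun t : T => X t.1 ω) ℙ)
             (Measure.map (fun ω => fun t : T => X (π t.1) ω) ℙ)
        ≤ ∑ t ∈ T, d t (π t))
    (T : Finset 𝒯)
    (G : Finset (Equiv.Perm {x // x ∈ T}))
    (hGone : 1 ∈ G) (hGmul : ∀ π ∈ G, ∀ π' ∈ G, π * π' ∈ G)
    (hGinv : ∀ π ∈ G, π⁻¹ ∈ G)
    (S : ({x // x ∈ T} → 𝒳) → ℝ) (hS : Measurable S)
    (α : ℝ) (hα : α ∈ Set.Icc (0 : ℝ) 1) :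
    ℙ {ω | 1 - α <
        (G.card : ℝ)⁻¹ * ∑ π ∈ G,
            (if S (fun t => X (π t).1 ω) < S (fun t => X t.1 ω) then (1 : ℝ) else 0)
          - (G.card : ℝ)⁻¹ * ∑ π ∈ G, ∑ t : {x // x ∈ T}, d t.1 (π t).1}
      ≤ ENNReal.ofReal α :=
  stmt10_general ℙ X hX d hexch T G hGone hGmul hGinv S hS α
end

section
/- Let X and Y be real random variables taking values in [a, b] (a ≤ b), and U a random element of a measurable space, all defined on a common probability space. If the total variation distance between the law of (X, U) and the law of (Y, U) is at most ε, then E| E[X | σ(U)] − E[Y | σ(U)] | ≤ (b − a) ε. -/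
open MeasureTheory

/-!
Let `Z = E[X | U] - E[Y | U]`. The sign of `Z` is a function `h(U)` of `U`, so
`E|Z| = E[h(U) (X - Y)]`. Since `X, Y ∈ [a, b]` and `|h| ≤ 1`, the test function
`f(x, y) = h(y) (x - (a + b) / 2) + (b - a) / 2` takes values in `[0, b - a]`, and
`E[h(U) (X - Y)] = E f(X, U) - E f(Y, U)`. By the layer-cake formula, the integrals of a function
with values in `[0, M]` against two measures differ by at most `M` times their total variation
distance.
-/

lemma integrable_of_forall_mem_Icc {α : Type*} [MeasurableSpace α] {μ : Measure α}
    [IsFiniteMeasure μ] {W : α → ℝ} (hW : AEStronglyMeasurable W μ) {a b : ℝ}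
    (hWab : ∀ x, W x ∈ Set.Icc a b) : Integrable W μ :=
  Integrable.of_bound hW (max |a| |b|)
    (ae_of_all _ fun x => abs_le_max_abs_abs (hWab x).1 (hWab x).2)

section TotalVariation

variable {α : Type*} [MeasurableSpace α] {μ ν : Measure α} [IsFiniteMeasure μ] [IsFiniteMeasure ν]

lemma abs_measureReal_sub_le_tvDist {A : Set α} (hA : MeasurableSet A) :
    |μ.real A - ν.real A| ≤ tvDist μ ν := by
  have hbdd : BddAbove (Set.range fun B : {B : Set α // MeasurableSet B} =>
      |(μ B.1).toReal - (ν B.1).toReal|) := by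
    refine ⟨max (μ.real Set.univ) (ν.real Set.univ), ?_⟩
    rintro _ ⟨B, rfl⟩
    change |μ.real B.1 - ν.real B.1| ≤ _
    exact abs_sub_le_of_nonneg_of_le measureReal_nonneg
      (le_max_of_le_left (measureReal_mono (Set.subset_univ _))) measureReal_nonneg
      (le_max_of_le_right (measureReal_mono (Set.subset_univ _)))
  exact le_ciSup hbdd ⟨A, hA⟩

lemma integral_le_integral_add_mul_tvDist {f : α → ℝ} {M : ℝ} (hf : Measurable f) (hM : 0 ≤ M)
    (hfμ : ∀ᵐ x ∂μ, f x ∈ Set.Icc 0 M) (hfν : ∀ᵐ x ∂ν, f x ∈ Set.Icc 0 M) :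
    ∫ x, f x ∂μ ≤ ∫ x, f x ∂ν + M * tvDist μ ν := by
  have layercake : ∀ (κ : Measure α) [IsFiniteMeasure κ], (∀ᵐ x ∂κ, f x ∈ Set.Icc 0 M) →
      ∫ x, f x ∂κ = ∫ t in Set.Ioc 0 M, κ.real {x | t ≤ f x} := fun κ _ hfκ =>
    (Integrable.of_bound hf.aestronglyMeasurable M (hfκ.mono fun x hx => by
      simpa [abs_of_nonneg hx.1] using hx.2)).integral_eq_integral_Ioc_meas_le
      (hfκ.mono fun x hx => hx.1) (hfκ.mono fun x hx => hx.2)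
  have hν_int : IntegrableOn (fun t => ν.real {x | t ≤ f x}) (Set.Ioc 0 M) := by
    have hanti : Antitone fun t => ν.real {x | t ≤ f x} := fun s t hst =>
      measureReal_mono fun x hx => hst.trans hx
    refine Integrable.of_bound hanti.measurable.aestronglyMeasurable (ν.real Set.univ)
      (ae_of_all _ fun t => ?_)
    rw [Real.norm_eq_abs, abs_of_nonneg measureReal_nonneg]
    exact measureReal_mono (Set.subset_univ _)
  have hconst_int : IntegrableOn (fun _ => tvDist μ ν) (Set.Ioc 0 M) :=
    integrableOn_const measure_Ioc_lt_top.ne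
  rw [layercake μ hfμ, layercake ν hfν]
  calc ∫ t in Set.Ioc 0 M, μ.real {x | t ≤ f x}
      ≤ ∫ t in Set.Ioc 0 M, (ν.real {x | t ≤ f x} + tvDist μ ν) :=
        integral_mono_of_nonneg (ae_of_all _ fun _ => measureReal_nonneg)
          (hν_int.add hconst_int) (ae_of_all _ fun t =>
            sub_le_iff_le_add'.1 (le_abs_self _ |>.trans
              (abs_measureReal_sub_le_tvDist (measurableSet_le measurable_const hf))))
    _ = (∫ t in Set.Ioc 0 M, ν.real {x | t ≤ f x}) + M * tvDist μ ν := by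
        rw [integral_add hν_int hconst_int, setIntegral_const]
        simp [hM]

end TotalVariation

section ConditionalExpectation

variable {Ω : Type*} {m m₀ : MeasurableSpace Ω} {μ : Measure Ω} [IsFiniteMeasure μ]

lemma integral_mul_condExp_of_stronglyMeasurable (hm : m ≤ m₀) {s W : Ω → ℝ} {C : ℝ}
    (hs : StronglyMeasurable[m] s) (hsC : ∀ ω, |s ω| ≤ C) (hW : Integrable W μ) :
    ∫ ω, s ω * μ[W | m] ω ∂μ = ∫ ω, s ω * W ω ∂μ := by
  have hsW : Integrable (s * W) μ :=
    hW.bdd_mul (hs.mono hm).aestronglyMeasurable (ae_of_all _ hsC)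
  calc ∫ ω, s ω * μ[W | m] ω ∂μ = ∫ ω, μ[s * W | m] ω ∂μ :=
        integral_congr_ae (condExp_mul_of_stronglyMeasurable_left hs hsW hW).symm
    _ = ∫ ω, s ω * W ω ∂μ := integral_condExp hm

lemma exists_integral_abs_condExp_comap_eq {𝒴 : Type*} [m𝒴 : MeasurableSpace 𝒴] {U : Ω → 𝒴}
    (hU : Measurable[m₀] U) {W : Ω → ℝ} (hW : Integrable W μ) :
    ∃ h : 𝒴 → ℝ, Measurable h ∧ (∀ y, |h y| ≤ 1) ∧
      ∫ ω, |μ[W | m𝒴.comap U] ω| ∂μ = ∫ ω, h (U ω) * W ω ∂μ := by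
  classical
  set Z := μ[W | m𝒴.comap U]
  obtain ⟨B, hB, hBZ⟩ : MeasurableSet[m𝒴.comap U] {ω | 0 ≤ Z ω} :=
    measurableSet_le measurable_const stronglyMeasurable_condExp.measurable
  let h : 𝒴 → ℝ := fun y => if y ∈ B then 1 else -1
  have hh : Measurable h := measurable_const.ite hB measurable_const
  have habs : ∀ ω, |Z ω| = h (U ω) * Z ω := fun ω => by
    have hmem : U ω ∈ B ↔ 0 ≤ Z ω := Set.ext_iff.1 hBZ ω
    by_cases hZ : 0 ≤ Z ω
    · simp [h, hmem.2 hZ, abs_of_nonneg hZ]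
    · simp [h, mt hmem.1 hZ, abs_of_neg (not_le.1 hZ)]
  have hh1 : ∀ y, |h y| ≤ 1 := fun y => by by_cases hy : y ∈ B <;> simp [h, hy]
  refine ⟨h, hh, hh1, ?_⟩
  simp_rw [habs]
  exact integral_mul_condExp_of_stronglyMeasurable (s := fun ω => h (U ω)) hU.comap_le
    (hh.comp (comap_measurable U)).stronglyMeasurable (fun ω => hh1 (U ω)) hW

end ConditionalExpectation

lemma mul_sub_midpoint_add_mem_Icc {a b s x : ℝ} (hs : |s| ≤ 1) (hx : x ∈ Set.Icc a b) :
    s * (x - (a + b) / 2) + (b - a) / 2 ∈ Set.Icc 0 (b - a) := by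
  have hx' : |x - (a + b) / 2| ≤ (b - a) / 2 := abs_le.2 ⟨by linarith [hx.1], by linarith [hx.2]⟩
  have : |s * (x - (a + b) / 2)| ≤ (b - a) / 2 := by
    rw [abs_mul]
    exact (mul_le_of_le_one_left (abs_nonneg _) hs).trans hx'
  constructor <;> linarith [abs_le.1 this]

lemma integral_mul_sub_le_mul_tvDist {Ω 𝒴 : Type*} [MeasurableSpace Ω] [MeasurableSpace 𝒴]
    {ℙ : Measure Ω} [IsFiniteMeasure ℙ] {a b : ℝ} (hab : a ≤ b) {X Y : Ω → ℝ}
    (hX : Measurable X) (hY : Measurable Y)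
    (hXab : ∀ ω, X ω ∈ Set.Icc a b) (hYab : ∀ ω, Y ω ∈ Set.Icc a b)
    {U : Ω → 𝒴} (hU : Measurable U) {h : 𝒴 → ℝ} (hh : Measurable h) (hh1 : ∀ y, |h y| ≤ 1) :
    ∫ ω, h (U ω) * (X ω - Y ω) ∂ℙ ≤
      (b - a) * tvDist (ℙ.map fun ω => (X ω, U ω)) (ℙ.map fun ω => (Y ω, U ω)) := by
  set f : ℝ × 𝒴 → ℝ := fun p => h p.2 * (p.1 - (a + b) / 2) + (b - a) / 2
  have hf : Measurable f := by fun_prop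
  have hlaw : ∀ W : Ω → ℝ, Measurable W → (∀ ω, W ω ∈ Set.Icc a b) →
      Integrable (fun ω => f (W ω, U ω)) ℙ ∧
        ∀ᵐ p ∂ℙ.map (fun ω => (W ω, U ω)), f p ∈ Set.Icc 0 (b - a) := fun W hW hWab =>
    have hfW : ∀ ω, f (W ω, U ω) ∈ Set.Icc 0 (b - a) := fun ω =>
      mul_sub_midpoint_add_mem_Icc (hh1 (U ω)) (hWab ω)
    ⟨integrable_of_forall_mem_Icc (hf.comp (hW.prodMk hU)).aestronglyMeasurable hfW,
      (ae_map_iff (hW.prodMk hU).aemeasurable (hf measurableSet_Icc)).2 (ae_of_all _ hfW)⟩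
  obtain ⟨hfX, hfμ⟩ := hlaw X hX hXab
  obtain ⟨hfY, hfν⟩ := hlaw Y hY hYab
  calc ∫ ω, h (U ω) * (X ω - Y ω) ∂ℙ = ∫ ω, f (X ω, U ω) - f (Y ω, U ω) ∂ℙ := by
        congr 1 with ω; ring
    _ = ∫ p, f p ∂ℙ.map (fun ω => (X ω, U ω)) - ∫ p, f p ∂ℙ.map (fun ω => (Y ω, U ω)) := by
        rw [integral_sub hfX hfY, integral_map (hX.prodMk hU).aemeasurable hf.aestronglyMeasurable,
          integral_map (hY.prodMk hU).aemeasurable hf.aestronglyMeasurable]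
    _ ≤ _ := by
        linarith [integral_le_integral_add_mul_tvDist hf (sub_nonneg.2 hab) hfμ hfν]

theorem stmt13_general
    {Ω 𝒴 : Type*} [MeasurableSpace Ω] [m𝒴 : MeasurableSpace 𝒴]
    (ℙ : Measure Ω) [IsProbabilityMeasure ℙ]
    (a b : ℝ) (hab : a ≤ b)
    (X Y : Ω → ℝ) (hX : Measurable X) (hY : Measurable Y)
    (hXab : ∀ ω, X ω ∈ Set.Icc a b) (hYab : ∀ ω, Y ω ∈ Set.Icc a b)
    (U : Ω → 𝒴) (hU : Measurable U)
    (ε : ℝ)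
    (htv : tvDist (Measure.map (fun ω => (X ω, U ω)) ℙ)
                  (Measure.map (fun ω => (Y ω, U ω)) ℙ) ≤ ε) :
    ∫ ω, |(ℙ[X | MeasurableSpace.comap U m𝒴]) ω
            - (ℙ[Y | MeasurableSpace.comap U m𝒴]) ω| ∂ℙ
      ≤ (b - a) * ε := by
  have hXint := integrable_of_forall_mem_Icc (μ := ℙ) hX.aestronglyMeasurable hXab
  have hYint := integrable_of_forall_mem_Icc (μ := ℙ) hY.aestronglyMeasurable hYab
  obtain ⟨h, hh, hh1, habs⟩ := exists_integral_abs_condExp_comap_eq hU (hXint.sub hYint)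
  calc ∫ ω, |ℙ[X | m𝒴.comap U] ω - ℙ[Y | m𝒴.comap U] ω| ∂ℙ
      = ∫ ω, |ℙ[X - Y | m𝒴.comap U] ω| ∂ℙ :=
        integral_congr_ae ((condExp_sub hXint hYint (m𝒴.comap U)).mono fun ω hω => by
          simp only [hω, Pi.sub_apply])
    _ = ∫ ω, h (U ω) * (X ω - Y ω) ∂ℙ := habs
    _ ≤ (b - a) * tvDist (ℙ.map fun ω => (X ω, U ω)) (ℙ.map fun ω => (Y ω, U ω)) :=
        integral_mul_sub_le_mul_tvDist hab hX hY hXab hYab hU hh hh1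
    _ ≤ (b - a) * ε := mul_le_mul_of_nonneg_left htv (sub_nonneg.2 hab)

/-- for `X, Y` real random variables taking values in `[a,b]` and `U` a
random element, if `d_TV(law(X,U), law(Y,U)) ≤ ε`, then
`E|E[X|σ(U)] − E[Y|σ(U)]| ≤ (b − a)ε`. -/
theorem stmt13
    {Ω 𝒴 : Type*} [MeasurableSpace Ω] [m𝒴 : MeasurableSpace 𝒴]
    (ℙ : Measure Ω) [IsProbabilityMeasure ℙ]
    (a b : ℝ) (hab : a ≤ b)
    (X Y : Ω → ℝ) (hX : Measurable X) (hY : Measurable Y)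
    (hXab : ∀ ω, X ω ∈ Set.Icc a b) (hYab : ∀ ω, Y ω ∈ Set.Icc a b)
    (U : Ω → 𝒴) (hU : Measurable U)
    (ε : ℝ) (hε : 0 ≤ ε)
    (htv : tvDist (Measure.map (fun ω => (X ω, U ω)) ℙ)
                  (Measure.map (fun ω => (Y ω, U ω)) ℙ) ≤ ε) :
    ∫ ω, |(ℙ[X | MeasurableSpace.comap U m𝒴]) ω
            - (ℙ[Y | MeasurableSpace.comap U m𝒴]) ω| ∂ℙ
      ≤ (b - a) * ε :=
  stmt13_general (m𝒴 := m𝒴) ℙ a b hab X Y hX hY hXab hYab U hU ε htv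
end

section
/- Let N ∈ ℕ and let μ = μ₁ × ⋯ × μ_N and ν = ν₁ × ⋯ × ν_N be finite product probability measures on a product of N measurable spaces. Then 1 − exp(−(1/2) Σ_{n=1}^N d_TV(μ_n, ν_n)²) ≤ d_TV(μ, ν) ≤ Σ_{n=1}^N d_TV(μ_n, ν_n). -/
/-!
Write every measure as a density with respect to a common dominating measure (for the
factors, `μₙ + νₙ`; for the products, the product of these), so that `d_TV = 1 - ∫ min(f, g)`.
With `tₙ = d_TV(μₙ, νₙ)`, the upper bound follows from `min(∏ fₙ, ∏ gₙ) ≥ ∏ min(fₙ, gₙ)` and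
`∏ (1 - tₙ) ≥ 1 - ∑ tₙ`.
For the lower bound, `min(f, g) ≤ √(fg)`, the Bhattacharyya coefficient `∫ √(fg)` is
multiplicative, and Cauchy–Schwarz applied to `√(fg) = √(min(f, g) · max(f, g))` gives
`(∫ √(fₙgₙ))² ≤ (1 - tₙ)(1 + tₙ) = 1 - tₙ² ≤ exp(-tₙ²)`.
-/

open MeasureTheory

open ENNReal

section Density

variable {α : Type*} [MeasurableSpace α] {μ ν Λ : Measure α} {F G : α → ℝ≥0∞}

lemma tvDist_nonneg : 0 ≤ tvDist μ ν :=
  Real.iSup_nonneg fun _ ↦ abs_nonneg _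

lemma tvDist_le_one [IsProbabilityMeasure μ] [IsProbabilityMeasure ν] : tvDist μ ν ≤ 1 :=
  Real.iSup_le (fun _ ↦ abs_sub_le_of_nonneg_of_le toReal_nonneg measureReal_le_one
    toReal_nonneg measureReal_le_one) zero_le_one

lemma lintegral_eq_one_of_eq_withDensity [IsProbabilityMeasure μ] (hμ : μ = Λ.withDensity F) :
    ∫⁻ x, F x ∂Λ = 1 := by
  rw [← setLIntegral_univ, ← withDensity_apply _ MeasurableSet.univ, ← hμ, measure_univ]

lemma lintegral_min_ne_top [IsProbabilityMeasure μ] (hμ : μ = Λ.withDensity F) :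
    ∫⁻ x, min (F x) (G x) ∂Λ ≠ ∞ :=
  ne_top_of_le_ne_top one_ne_top <|
    (lintegral_mono fun _ ↦ min_le_left _ _).trans_eq (lintegral_eq_one_of_eq_withDensity hμ)

lemma measure_add_lintegral_min_le [IsProbabilityMeasure μ] (hμ : μ = Λ.withDensity F)
    (hν : ν = Λ.withDensity G) {A : Set α} (hA : MeasurableSet A) :
    μ A + ∫⁻ x, min (F x) (G x) ∂Λ ≤ 1 + ν A :=
  calc μ A + ∫⁻ x, min (F x) (G x) ∂Λ
      = ∫⁻ x in A, F x ∂Λ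
          + (∫⁻ x in A, min (F x) (G x) ∂Λ + ∫⁻ x in Aᶜ, min (F x) (G x) ∂Λ) := by
        rw [hμ, withDensity_apply _ hA, lintegral_add_compl _ hA]
    _ ≤ ∫⁻ x in A, F x ∂Λ + (∫⁻ x in A, G x ∂Λ + ∫⁻ x in Aᶜ, F x ∂Λ) := by
        gcongr with x x <;> simp
    _ = (∫⁻ x in A, F x ∂Λ + ∫⁻ x in Aᶜ, F x ∂Λ) + ∫⁻ x in A, G x ∂Λ := by ring
    _ = 1 + ν A := by
        rw [lintegral_add_compl _ hA, lintegral_eq_one_of_eq_withDensity hμ, hν,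
          withDensity_apply _ hA]

lemma measure_add_lintegral_min_eq [IsProbabilityMeasure μ] (hF : Measurable F)
    (hG : Measurable G) (hμ : μ = Λ.withDensity F) (hν : ν = Λ.withDensity G) :
    μ {x | G x < F x} + ∫⁻ x, min (F x) (G x) ∂Λ = 1 + ν {x | G x < F x} := by
  set A := {x | G x < F x}
  have hA : MeasurableSet A := measurableSet_lt hG hF
  have hmin : ∫⁻ x, min (F x) (G x) ∂Λ = ν A + μ Aᶜ := by
    rw [hμ, hν, withDensity_apply _ hA, withDensity_apply _ hA.compl,
      ← lintegral_add_compl _ hA]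
    congr 1
    · exact setLIntegral_congr_fun hA fun x (hx : G x < F x) ↦ min_eq_right hx.le
    · exact setLIntegral_congr_fun hA.compl fun x (hx : ¬G x < F x) ↦ min_eq_left (not_lt.1 hx)
  rw [hmin, ← add_assoc, add_comm _ (ν A), add_assoc, measure_add_measure_compl hA,
    measure_univ, add_comm]

lemma toReal_measure_sub_le [IsProbabilityMeasure μ] [IsProbabilityMeasure ν]
    (hμ : μ = Λ.withDensity F) (hν : ν = Λ.withDensity G) {A : Set α} (hA : MeasurableSet A) :
    (μ A).toReal - (ν A).toReal ≤ 1 - (∫⁻ x, min (F x) (G x) ∂Λ).toReal := by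
  have := toReal_mono (by finiteness) (measure_add_lintegral_min_le hμ hν hA)
  rw [toReal_add (by finiteness) (lintegral_min_ne_top hμ), toReal_add one_ne_top (by finiteness),
    toReal_one] at this
  linarith

lemma tvDist_eq_one_sub_lintegral_min [IsProbabilityMeasure μ] [IsProbabilityMeasure ν]
    (hF : Measurable F) (hG : Measurable G) (hμ : μ = Λ.withDensity F)
    (hν : ν = Λ.withDensity G) :
    tvDist μ ν = 1 - (∫⁻ x, min (F x) (G x) ∂Λ).toReal := by
  have hle (A : {A : Set α // MeasurableSet A}) :
      |(μ A.1).toReal - (ν A.1).toReal| ≤ 1 - (∫⁻ x, min (F x) (G x) ∂Λ).toReal := by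
    refine abs_sub_le_iff.2 ⟨toReal_measure_sub_le hμ hν A.2, ?_⟩
    simpa only [min_comm] using toReal_measure_sub_le hν hμ A.2
  refine le_antisymm (ciSup_le hle) (le_ciSup_of_le ⟨_, Set.forall_mem_range.2 hle⟩
    ⟨_, measurableSet_lt hG hF⟩ ((le_of_eq ?_).trans (le_abs_self _)))
  have := congrArg ENNReal.toReal (measure_add_lintegral_min_eq hF hG hμ hν)
  rw [toReal_add (by finiteness) (lintegral_min_ne_top hμ), toReal_add one_ne_top (by finiteness),
    toReal_one] at this
  linarith

lemma min_le_rpow_mul (a b : ℝ≥0∞) : min a b ≤ (a * b) ^ (1 / 2 : ℝ) :=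
  calc min a b = (min a b * min a b) ^ (1 / 2 : ℝ) := by
        rw [← sq, ← rpow_natCast, ← rpow_mul]; norm_num
    _ ≤ (a * b) ^ (1 / 2 : ℝ) := by gcongr <;> simp

lemma lintegral_sqrt_mul_le {u v : α → ℝ≥0∞} (hu : AEMeasurable u Λ) (hv : AEMeasurable v Λ) :
    ∫⁻ x, (u x * v x) ^ (1 / 2 : ℝ) ∂Λ
      ≤ (∫⁻ x, u x ∂Λ) ^ (1 / 2 : ℝ) * (∫⁻ x, v x ∂Λ) ^ (1 / 2 : ℝ) := by
  have := lintegral_mul_le_Lp_mul_Lq Λ Real.HolderConjugate.two_two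
    (hu.pow_const (1 / 2 : ℝ)) (hv.pow_const (1 / 2 : ℝ))
  have hsq (x : ℝ≥0∞) : (x ^ (1 / 2 : ℝ)) ^ (2 : ℝ) = x := by rw [← rpow_mul]; norm_num
  simpa only [Pi.mul_apply, hsq, one_div_one_div,
    ← mul_rpow_of_nonneg _ _ (by norm_num : (0 : ℝ) ≤ 1 / 2)] using this

lemma sq_lintegral_sqrt_mul_le (hF : Measurable F) (hG : Measurable G) :
    (∫⁻ x, (F x * G x) ^ (1 / 2 : ℝ) ∂Λ) ^ 2
      ≤ (∫⁻ x, min (F x) (G x) ∂Λ) * ∫⁻ x, max (F x) (G x) ∂Λ := by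
  have := lintegral_sqrt_mul_le (Λ := Λ) (hF.min hG).aemeasurable (hF.max hG).aemeasurable
  simp only [min_mul_max] at this
  calc _ ≤ ((∫⁻ x, min (F x) (G x) ∂Λ) ^ (1 / 2 : ℝ)
          * (∫⁻ x, max (F x) (G x) ∂Λ) ^ (1 / 2 : ℝ)) ^ 2 := by gcongr
    _ = _ := by
        rw [mul_pow, ← rpow_natCast, ← rpow_natCast, ← rpow_mul, ← rpow_mul]
        norm_num

lemma lintegral_sqrt_mul_ne_top [IsProbabilityMeasure μ] [IsProbabilityMeasure ν]
    (hF : Measurable F) (hG : Measurable G) (hμ : μ = Λ.withDensity F)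
    (hν : ν = Λ.withDensity G) : ∫⁻ x, (F x * G x) ^ (1 / 2 : ℝ) ∂Λ ≠ ∞ := by
  refine ne_top_of_le_ne_top ?_ (lintegral_sqrt_mul_le hF.aemeasurable hG.aemeasurable)
  rw [lintegral_eq_one_of_eq_withDensity hμ, lintegral_eq_one_of_eq_withDensity hν]
  simp

lemma lintegral_min_add_lintegral_max [IsProbabilityMeasure μ] [IsProbabilityMeasure ν]
    (hF : Measurable F) (hG : Measurable G) (hμ : μ = Λ.withDensity F)
    (hν : ν = Λ.withDensity G) :
    ∫⁻ x, min (F x) (G x) ∂Λ + ∫⁻ x, max (F x) (G x) ∂Λ = 2 := by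
  simp_rw [← lintegral_add_left (hF.min hG), min_add_max, lintegral_add_left hF,
    lintegral_eq_one_of_eq_withDensity hμ, lintegral_eq_one_of_eq_withDensity hν,
    one_add_one_eq_two]

lemma le_exp_neg_sq_div_two {a t : ℝ} (ha : 0 ≤ a) (h : a ^ 2 ≤ 1 - t ^ 2) :
    a ≤ Real.exp (-t ^ 2 / 2) := by
  refine (pow_le_pow_iff_left₀ ha (Real.exp_nonneg _) two_ne_zero).1 ?_
  rw [← Real.exp_nat_mul, show ((2 : ℕ) : ℝ) * (-t ^ 2 / 2) = -t ^ 2 by push_cast; ring]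
  linarith [Real.add_one_le_exp (-t ^ 2)]

lemma toReal_lintegral_sqrt_mul_le_exp [IsProbabilityMeasure μ] [IsProbabilityMeasure ν]
    (hF : Measurable F) (hG : Measurable G) (hμ : μ = Λ.withDensity F)
    (hν : ν = Λ.withDensity G) :
    (∫⁻ x, (F x * G x) ^ (1 / 2 : ℝ) ∂Λ).toReal ≤ Real.exp (-tvDist μ ν ^ 2 / 2) := by
  have hsum := lintegral_min_add_lintegral_max hF hG hμ hν
  have hmax : ∫⁻ x, max (F x) (G x) ∂Λ ≠ ∞ := fun h ↦ by simp [h] at hsum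
  have hmin := lintegral_min_ne_top (G := G) hμ
  have hsq := toReal_mono (mul_ne_top hmin hmax) (sq_lintegral_sqrt_mul_le (Λ := Λ) hF hG)
  rw [toReal_mul, toReal_pow, show (∫⁻ x, max (F x) (G x) ∂Λ).toReal
    = 2 - (∫⁻ x, min (F x) (G x) ∂Λ).toReal from
      eq_sub_of_add_eq' (by rw [← toReal_add hmin hmax, hsum, toReal_ofNat])] at hsq
  refine le_exp_neg_sq_div_two toReal_nonneg ?_
  rw [tvDist_eq_one_sub_lintegral_min hF hG hμ hν]
  linarith

end Density

lemma one_sub_sum_le_prod_one_sub {ι : Type*} (s : Finset ι) {x : ι → ℝ}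
    (h0 : ∀ i ∈ s, 0 ≤ x i) (h1 : ∀ i ∈ s, x i ≤ 1) :
    1 - ∑ i ∈ s, x i ≤ ∏ i ∈ s, (1 - x i) := by
  induction s using Finset.cons_induction with
  | empty => simp
  | cons a s ha ih =>
    rw [Finset.sum_cons, Finset.prod_cons]
    have hs := ih (fun i hi ↦ h0 i (s.mem_cons_of_mem hi)) fun i hi ↦ h1 i (s.mem_cons_of_mem hi)
    have hsum : 0 ≤ ∑ i ∈ s, x i := Finset.sum_nonneg fun i hi ↦ h0 i (s.mem_cons_of_mem hi)
    nlinarith [h0 a (s.mem_cons_self a), h1 a (s.mem_cons_self a)]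

theorem lintegral_fin_nat_prod_eq_prod {n : ℕ} {E : Fin n → Type*}
    [∀ i, MeasurableSpace (E i)] {μ : (i : Fin n) → Measure (E i)} [∀ i, SigmaFinite (μ i)]
    {f : (i : Fin n) → E i → ℝ≥0∞} (hf : ∀ i, Measurable (f i)) :
    ∫⁻ x, ∏ i, f i (x i) ∂Measure.pi μ = ∏ i, ∫⁻ y, f i y ∂μ i := by
  induction n with
  | zero => simp
  | succ n ih =>
    let g : ((i : Fin n) → E ((0 : Fin (n + 1)).succAbove i)) → ℝ≥0∞ :=
      fun y ↦ ∏ i, f _ (y i)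
    have hg : Measurable g :=
      Finset.measurable_prod _ fun i _ ↦ (hf _).comp (measurable_pi_apply i)
    calc ∫⁻ x, ∏ i, f i (x i) ∂Measure.pi μ
        = ∫⁻ x, f 0 x.1 * g x.2 ∂(μ 0).prod (Measure.pi fun i ↦ μ (Fin.succAbove 0 i)) := by
          rw [← (measurePreserving_piFinSuccAbove μ 0).symm.lintegral_comp_emb
            (MeasurableEquiv.measurableEmbedding _)]
          refine lintegral_congr fun x ↦ ?_
          rw [Fin.prod_univ_succAbove _ 0]
          simp only [MeasurableEquiv.piFinSuccAbove_symm_apply, Fin.insertNthEquiv_apply,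
            Fin.insertNth_apply_same, Fin.insertNth_apply_succAbove, g]
      _ = ∏ i, ∫⁻ y, f i y ∂μ i := by
          rw [lintegral_prod_mul (hf 0).aemeasurable hg.aemeasurable, ih fun i ↦ hf _,
            Fin.prod_univ_succAbove _ 0]

section Product

variable {ι : Type*} [Fintype ι] {E : ι → Type*} [∀ i, MeasurableSpace (E i)]
  {μ ν Λ : (i : ι) → Measure (E i)} [∀ i, SigmaFinite (Λ i)] {f g : (i : ι) → E i → ℝ≥0∞}

theorem lintegral_fintype_prod_eq_prod (hf : ∀ i, Measurable (f i)) :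
    ∫⁻ x, ∏ i, f i (x i) ∂Measure.pi Λ = ∏ i, ∫⁻ y, f i y ∂Λ i := by
  let e := (Fintype.equivFin ι).symm
  rw [← (measurePreserving_piCongrLeft _ e).lintegral_comp_emb
    (MeasurableEquiv.measurableEmbedding _)]
  simp_rw [← e.prod_comp, MeasurableEquiv.coe_piCongrLeft, Equiv.piCongrLeft_apply_apply]
  exact lintegral_fin_nat_prod_eq_prod fun i ↦ hf (e i)

theorem Measure.pi_eq_withDensity_prod [∀ i, SigmaFinite (μ i)] (hf : ∀ i, Measurable (f i))
    (hμ : ∀ i, μ i = (Λ i).withDensity (f i)) :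
    Measure.pi μ = (Measure.pi Λ).withDensity fun x ↦ ∏ i, f i (x i) := by
  refine Measure.pi_eq fun s hs ↦ ?_
  rw [withDensity_apply _ (MeasurableSet.univ_pi hs), Measure.restrict_pi_pi,
    lintegral_fintype_prod_eq_prod hf]
  exact Finset.prod_congr rfl fun i _ ↦ by rw [hμ i, withDensity_apply _ (hs i)]

lemma prod_lintegral_min_le_lintegral_min_prod (hf : ∀ i, Measurable (f i))
    (hg : ∀ i, Measurable (g i)) :
    ∏ i, ∫⁻ y, min (f i y) (g i y) ∂Λ i
      ≤ ∫⁻ x, min (∏ i, f i (x i)) (∏ i, g i (x i)) ∂Measure.pi Λ := by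
  rw [← lintegral_fintype_prod_eq_prod fun i ↦ (hf i).min (hg i)]
  exact lintegral_mono fun x ↦ le_min (Finset.prod_le_prod' fun i _ ↦ min_le_left _ _)
    (Finset.prod_le_prod' fun i _ ↦ min_le_right _ _)

lemma lintegral_sqrt_mul_prod_eq (hf : ∀ i, Measurable (f i)) (hg : ∀ i, Measurable (g i)) :
    ∫⁻ x, ((∏ i, f i (x i)) * ∏ i, g i (x i)) ^ (1 / 2 : ℝ) ∂Measure.pi Λ
      = ∏ i, ∫⁻ y, (f i y * g i y) ^ (1 / 2 : ℝ) ∂Λ i := by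
  rw [← lintegral_fintype_prod_eq_prod (f := fun i y ↦ (f i y * g i y) ^ (1 / 2 : ℝ))
    fun i ↦ ((hf i).mul (hg i)).pow_const _]
  refine lintegral_congr fun x ↦ ?_
  rw [← Finset.prod_mul_distrib, prod_rpow_of_nonneg (by norm_num)]

variable [∀ i, IsProbabilityMeasure (μ i)] [∀ i, IsProbabilityMeasure (ν i)]

theorem tvDist_pi_le_sum (hf : ∀ i, Measurable (f i)) (hg : ∀ i, Measurable (g i))
    (hμ : ∀ i, μ i = (Λ i).withDensity (f i)) (hν : ∀ i, ν i = (Λ i).withDensity (g i)) :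
    tvDist (Measure.pi μ) (Measure.pi ν) ≤ ∑ i, tvDist (μ i) (ν i) := by
  have hμpi := Measure.pi_eq_withDensity_prod hf hμ
  have hνpi := Measure.pi_eq_withDensity_prod hg hν
  calc tvDist (Measure.pi μ) (Measure.pi ν)
      = 1 - (∫⁻ x, min (∏ i, f i (x i)) (∏ i, g i (x i)) ∂Measure.pi Λ).toReal :=
        tvDist_eq_one_sub_lintegral_min (by fun_prop) (by fun_prop) hμpi hνpi
    _ ≤ 1 - ∏ i, (1 - tvDist (μ i) (ν i)) := by
        have hfactor (i : ι) : 1 - tvDist (μ i) (ν i)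
            = (∫⁻ y, min (f i y) (g i y) ∂Λ i).toReal := by
          rw [tvDist_eq_one_sub_lintegral_min (hf i) (hg i) (hμ i) (hν i), _root_.sub_sub_cancel]
        gcongr
        rw [Finset.prod_congr rfl fun i _ ↦ hfactor i, ← toReal_prod]
        exact toReal_mono (lintegral_min_ne_top hμpi)
          (prod_lintegral_min_le_lintegral_min_prod hf hg)
    _ ≤ ∑ i, tvDist (μ i) (ν i) := by
        linarith [one_sub_sum_le_prod_one_sub Finset.univ (fun i _ ↦ tvDist_nonneg)
          fun i _ ↦ tvDist_le_one (μ := μ i) (ν := ν i)]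

theorem one_sub_exp_le_tvDist_pi (hf : ∀ i, Measurable (f i)) (hg : ∀ i, Measurable (g i))
    (hμ : ∀ i, μ i = (Λ i).withDensity (f i)) (hν : ∀ i, ν i = (Λ i).withDensity (g i)) :
    1 - Real.exp (-(1 / 2) * ∑ i, tvDist (μ i) (ν i) ^ 2)
      ≤ tvDist (Measure.pi μ) (Measure.pi ν) := by
  have hμpi := Measure.pi_eq_withDensity_prod hf hμ
  have hνpi := Measure.pi_eq_withDensity_prod hg hν
  rw [tvDist_eq_one_sub_lintegral_min (by fun_prop) (by fun_prop) hμpi hνpi]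
  refine sub_le_sub_left ?_ 1
  calc (∫⁻ x, min (∏ i, f i (x i)) (∏ i, g i (x i)) ∂Measure.pi Λ).toReal
      ≤ (∏ i, ∫⁻ y, (f i y * g i y) ^ (1 / 2 : ℝ) ∂Λ i).toReal := by
        refine toReal_mono
          (prod_ne_top fun i _ ↦ lintegral_sqrt_mul_ne_top (hf i) (hg i) (hμ i) (hν i)) ?_
        rw [← lintegral_sqrt_mul_prod_eq hf hg]
        exact lintegral_mono fun x ↦ min_le_rpow_mul _ _
    _ ≤ ∏ i, Real.exp (-tvDist (μ i) (ν i) ^ 2 / 2) := by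
        rw [toReal_prod]
        exact Finset.prod_le_prod (fun i _ ↦ toReal_nonneg) fun i _ ↦
          toReal_lintegral_sqrt_mul_le_exp (hf i) (hg i) (hμ i) (hν i)
    _ = Real.exp (-(1 / 2) * ∑ i, tvDist (μ i) (ν i) ^ 2) := by
        rw [← Real.exp_sum, Finset.mul_sum]
        ring_nf

end Product

/-- for finite product probability measures `μ = μ₁ × ⋯ × μ_N` and
`ν = ν₁ × ⋯ × ν_N`,
`1 − exp(−(1/2) Σₙ d_TV(μₙ,νₙ)²) ≤ d_TV(μ,ν) ≤ Σₙ d_TV(μₙ,νₙ)`. -/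
theorem stmt16
    {N : ℕ} {𝒴 : Fin N → Type*} [∀ n, MeasurableSpace (𝒴 n)]
    (μ ν : ∀ n, Measure (𝒴 n))
    [∀ n, IsProbabilityMeasure (μ n)] [∀ n, IsProbabilityMeasure (ν n)] :
    1 - Real.exp (-(1 / 2) * ∑ n : Fin N, tvDist (μ n) (ν n) ^ 2)
        ≤ tvDist (Measure.pi μ) (Measure.pi ν)
      ∧ tvDist (Measure.pi μ) (Measure.pi ν) ≤ ∑ n : Fin N, tvDist (μ n) (ν n) := by
  have hμ (n : Fin N) : μ n = (μ n + ν n).withDensity ((μ n).rnDeriv (μ n + ν n)) :=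
    (Measure.withDensity_rnDeriv_eq _ _ (Measure.AbsolutelyContinuous.rfl.add_right _)).symm
  have hν (n : Fin N) : ν n = (μ n + ν n).withDensity ((ν n).rnDeriv (μ n + ν n)) :=
    (Measure.withDensity_rnDeriv_eq _ _ (Measure.AbsolutelyContinuous.rfl.add_right' _)).symm
  have hf (n : Fin N) := Measure.measurable_rnDeriv (μ n) (μ n + ν n)
  have hg (n : Fin N) := Measure.measurable_rnDeriv (ν n) (μ n + ν n)
  exact ⟨one_sub_exp_le_tvDist_pi hf hg hμ hν, tvDist_pi_le_sum hf hg hμ hν⟩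
end

section
/- Let N ∈ ℕ, N ≥ 1, and u ∈ ℝ^N with 0 ≤ u₁ ≤ u₂ ≤ ⋯ ≤ u_N. Define M = max { J ∈ {1,…,N} : (1/J)(2 + Σ_{i=1}^J u_i) > u_J } (this set contains J = 1, so M is well defined), and define x* ∈ ℝ^N by x*_j = (1/2)(−u_j + (1/M)(2 + Σ_{i=1}^M u_i)) for j ≤ M and x*_j = 0 for j > M. Then x* lies in the probability simplex (x*_j ≥ 0 for all j and Σ_j x*_j = 1), and for every x ∈ ℝ^N with x_j ≥ 0 for all j and Σ_j x_j = 1, we have ‖x*‖² + ⟨x*, u⟩ ≤ ‖x‖² + ⟨x, u⟩; that is, x* minimizes ‖x‖² + ⟨x, u⟩ over the probability simplex. -/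
/-- simplex projection: for `0 ≤ u₁ ≤ ⋯ ≤ u_N` (here `u 0, …, u (N-1)`
in 0-indexed form), with `M = max{J ∈ {1,…,N} : (1/J)(2 + Σ_{i=1}^J uᵢ) > u_J}` and
`x*_j = (1/2)(−u_j + (1/M)(2 + Σ_{i=1}^M uᵢ))` for `j ≤ M`, `x*_j = 0` for `j > M`,
the point `x*` lies in the probability simplex and minimizes `‖x‖² + ⟨x,u⟩` over it. -/
theorem stmt17
    (N : ℕ) (hN : 1 ≤ N)
    (u : ℕ → ℝ)
    (hu0 : 0 ≤ u 0)
    (humono : ∀ i j : ℕ, i ≤ j → j < N → u i ≤ u j)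
    (M : ℕ)
    (hM1 : M ∈ Finset.Icc 1 N)
    (hM2 : u (M - 1) < (1 / (M : ℝ)) * (2 + ∑ i ∈ Finset.range M, u i))
    (hM3 : ∀ J ∈ Finset.Icc 1 N,
      u (J - 1) < (1 / (J : ℝ)) * (2 + ∑ i ∈ Finset.range J, u i) → J ≤ M)
    (xstar : Fin N → ℝ)
    (hxdef : ∀ j : Fin N, xstar j =
      if (j : ℕ) < M
        then (1 / 2) * (-(u j) + (1 / (M : ℝ)) * (2 + ∑ i ∈ Finset.range M, u i))
        else 0) :
    (∀ j, 0 ≤ xstar j) ∧ (∑ j : Fin N, xstar j = 1) ∧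
      ∀ x : Fin N → ℝ, (∀ j, 0 ≤ x j) → (∑ j : Fin N, x j = 1) →
        (∑ j : Fin N, xstar j ^ 2) + ∑ j : Fin N, xstar j * u j
          ≤ (∑ j : Fin N, x j ^ 2) + ∑ j : Fin N, x j * u j := by
  rw [Finset.mem_Icc] at hM1
  obtain ⟨hM1a, hM1b⟩ := hM1
  set S : ℝ := ∑ i ∈ Finset.range M, u i with hS
  set lam : ℝ := (1 / (M : ℝ)) * (2 + S) with hlam
  have hMpos : (0 : ℝ) < (M : ℝ) := by exact_mod_cast hM1a
  have hMne : (M : ℝ) ≠ 0 := ne_of_gt hMpos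
  have hMlam : (M : ℝ) * lam = 2 + S := by
    rw [hlam]; field_simp
  -- nonnegativity
  have hnonneg : ∀ j : Fin N, 0 ≤ xstar j := by
    intro j
    rw [hxdef]
    split_ifs with h
    · have hj : (j : ℕ) ≤ M - 1 := Nat.le_pred_of_lt h
      have hlt : M - 1 < N := by omega
      have := humono j (M - 1) hj hlt
      linarith
    · exact le_refl 0
  -- sum equals 1
  have hsum : ∑ j : Fin N, xstar j = 1 := by
    have h1 : ∑ j : Fin N, xstar j
        = ∑ j ∈ Finset.range N, (if j < M then (1/2) * (-(u j) + lam) else 0) := by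
      rw [← Fin.sum_univ_eq_sum_range]
      exact Finset.sum_congr rfl fun j _ => by rw [hxdef]
    have h2 : ∑ j ∈ Finset.range N, (if j < M then (1/2) * (-(u j) + lam) else 0)
        = ∑ j ∈ Finset.range M, (1/2) * (-(u j) + lam) := by
      rw [← Finset.sum_subset (Finset.range_subset_range.mpr hM1b)]
      · exact Finset.sum_congr rfl fun j hj => by
          rw [if_pos (Finset.mem_range.mp hj)]
      · intro j _ hj
        rw [if_neg (by simpa using Finset.mem_range.not.mp hj)]
    have h3 : ∑ j ∈ Finset.range M, (1/2) * (-(u j) + lam)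
        = (1/2) * (-S + (M : ℝ) * lam) := by
      rw [← Finset.mul_sum, Finset.sum_add_distrib, Finset.sum_const,
        Finset.card_range, nsmul_eq_mul, Finset.sum_neg_distrib, hS]
    rw [h1, h2, h3, hMlam]; ring
  -- key: lam ≤ u j for j ≥ M
  have hkeyM : ∀ j : ℕ, M ≤ j → j < N → lam ≤ u j := by
    intro j hMj hjN
    have hMN : M < N := lt_of_le_of_lt hMj hjN
    have h4 : ¬ (u ((M+1) - 1) < (1 / ((M+1 : ℕ) : ℝ)) * (2 + ∑ i ∈ Finset.range (M+1), u i)) := by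
      intro hcon
      have := hM3 (M+1) (Finset.mem_Icc.mpr ⟨by omega, by omega⟩) hcon
      omega
    push_neg at h4
    have h5 : (1 / ((M : ℝ) + 1)) * (2 + (S + u M)) ≤ u M := by
      simpa [Finset.sum_range_succ, hS] using h4
    have hpos1 : (0 : ℝ) < (M : ℝ) + 1 := by linarith
    have h6 : 2 + S + u M ≤ ((M : ℝ) + 1) * u M := by
      have h := mul_le_mul_of_nonneg_left h5 hpos1.le
      rw [← mul_assoc, mul_one_div, div_self (ne_of_gt hpos1), one_mul] at h
      linarith
    have h7 : 2 + S ≤ (M : ℝ) * u M := by nlinarith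
    have h8 : lam ≤ u M := by
      rw [hlam]
      rw [div_mul_eq_mul_div, one_mul, div_le_iff₀ hMpos]
      linarith [h7]
    exact le_trans h8 (humono M j hMj hjN)
  refine ⟨hnonneg, hsum, ?_⟩
  intro x hx hxs
  have key : ∀ j : Fin N, lam * (x j - xstar j) ≤ (2 * xstar j + u j) * (x j - xstar j) := by
    intro j
    rw [hxdef]
    split_ifs with h
    · have heq : 2 * ((1/2) * (-(u j) + lam)) + u j = lam := by ring
      rw [heq]
    · have h1 : lam ≤ u j := hkeyM j (not_lt.mp h) j.isLt
      have h2 : 0 ≤ x j := hx j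
      nlinarith
  have hkeysum : ∑ j : Fin N, lam * (x j - xstar j)
      ≤ ∑ j : Fin N, (2 * xstar j + u j) * (x j - xstar j) :=
    Finset.sum_le_sum fun j _ => key j
  have hzero : ∑ j : Fin N, lam * (x j - xstar j) = 0 := by
    rw [← Finset.mul_sum, Finset.sum_sub_distrib, hxs, hsum]; ring
  have hsq : (0 : ℝ) ≤ ∑ j : Fin N, (x j - xstar j) ^ 2 :=
    Finset.sum_nonneg fun j _ => sq_nonneg _
  have htot : (∑ j : Fin N, x j ^ 2) + (∑ j : Fin N, x j * u j)
      - ((∑ j : Fin N, xstar j ^ 2) + (∑ j : Fin N, xstar j * u j))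
      = (∑ j : Fin N, (x j - xstar j) ^ 2)
        + ∑ j : Fin N, (2 * xstar j + u j) * (x j - xstar j) := by
    rw [← Finset.sum_add_distrib, ← Finset.sum_add_distrib, ← Finset.sum_sub_distrib,
      ← Finset.sum_add_distrib]
    exact Finset.sum_congr rfl fun j _ => by ring
  linarith
end

section
/- For all μ, μ' ∈ ℝ and σ > 0, the total variation distance between the Gaussian distributions N(μ, σ²) and N(μ', σ²) on ℝ satisfies d_TV(N(μ, σ²), N(μ', σ²)) = Φ(|μ − μ'|/(2σ)) − Φ(−|μ − μ'|/(2σ)), where Φ is the standard normal cumulative distribution function, and consequently d_TV(N(μ, σ²), N(μ', σ²)) ≤ |μ − μ'| / √(2πσ²). -/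
/-!
For `μ' ≤ μ` the two Gaussian densities cross at the midpoint `m = (μ + μ') / 2`, so `(m, ∞)` is
the positive set of a Hahn decomposition of `N(μ, σ²) - N(μ', σ²)` and the supremum defining the
total variation distance is attained there. Standardising turns the two masses of `(m, ∞)` into
`1 - Φ(-c)` and `1 - Φ(c)` with `c = |μ - μ'| / (2σ)`. The bound holds because `Φ` is Lipschitz
with constant `Φ'(0) = 1 / √(2π)`.
-/

open MeasureTheory ProbabilityTheory

/-- The standard normal cumulative distribution function
`Φ(x) = ∫_{-∞}^x (2π)^{-1/2} e^{-u²/2} du`. -/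
noncomputable def stdNormalCDF (x : ℝ) : ℝ :=
  ∫ u in Set.Iic x, (Real.sqrt (2 * Real.pi))⁻¹ * Real.exp (-u ^ 2 / 2)

open Set
open scoped NNReal

section TotalVariation

variable {X : Type*} [MeasurableSpace X]

lemma tvDist_comm (μ ν : Measure X) : tvDist μ ν = tvDist ν μ := by
  simp only [tvDist, abs_sub_comm]

lemma tvDist_eq_of_hahnDecomposition {μ ν : Measure X} [IsFiniteMeasure μ] [IsFiniteMeasure ν]
    (huniv : μ univ = ν univ) {B : Set X} (hB : MeasurableSet B)
    (hpos : ∀ A ⊆ B, ν A ≤ μ A) (hneg : ∀ A ⊆ Bᶜ, μ A ≤ ν A) :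
    tvDist μ ν = μ.real B - ν.real B := by
  set d : Set X → ℝ := fun s => μ.real s - ν.real s with hd
  have split : ∀ s {t}, MeasurableSet t → d s = d (s ∩ t) + d (s \ t) := by
    intro s t ht
    simp only [hd, ← measureReal_inter_add_sdiff (μ := μ) (s := s) ht,
      ← measureReal_inter_add_sdiff (μ := ν) (s := s) ht]
    ring
  have d_nonneg : ∀ A ⊆ B, 0 ≤ d A := fun A hA =>
    sub_nonneg.2 (ENNReal.toReal_mono (measure_ne_top μ A) (hpos A hA))
  have d_nonpos : ∀ A ⊆ Bᶜ, d A ≤ 0 := fun A hA =>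
    sub_nonpos.2 (ENNReal.toReal_mono (measure_ne_top ν A) (hneg A hA))
  have d_compl : d Bᶜ = -d B := by
    simp only [hd, measureReal_compl hB, measureReal_def (s := univ), huniv]
    ring
  have bound : ∀ A : {A : Set X // MeasurableSet A}, |d A| ≤ d B := by
    rintro ⟨A, hA⟩
    have hA_split := split A hB
    have hB_split := split B hA
    have hBc_split := split Bᶜ hA
    rw [inter_comm] at hB_split
    rw [inter_comm, ← Set.sdiff_eq] at hBc_split
    have := d_nonneg (A ∩ B) inter_subset_right
    have := d_nonneg (B \ A) sdiff_subset
    have := d_nonpos (A \ B) fun x hx => hx.2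
    have := d_nonpos (Bᶜ \ A) sdiff_subset
    rw [abs_le]
    constructor <;> linarith
  exact le_antisymm (ciSup_le bound)
    (le_ciSup_of_le ⟨_, forall_mem_range.2 bound⟩ ⟨B, hB⟩ (le_abs_self _))

end TotalVariation

section Gaussian

variable {v : ℝ≥0}

lemma gaussianPDFReal_le_of_sq_le {μ μ' x : ℝ} (h : (x - μ) ^ 2 ≤ (x - μ') ^ 2) :
    gaussianPDFReal μ' v x ≤ gaussianPDFReal μ v x := by
  unfold gaussianPDFReal
  gcongr

lemma gaussianReal_apply_le_of_sq_le (hv : v ≠ 0) {μ μ' : ℝ} {A : Set ℝ}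
    (h : ∀ x ∈ A, (x - μ) ^ 2 ≤ (x - μ') ^ 2) : gaussianReal μ' v A ≤ gaussianReal μ v A := by
  rw [gaussianReal_apply _ hv, gaussianReal_apply _ hv]
  exact setLIntegral_mono (measurable_gaussianPDF μ v) fun x hx =>
    ENNReal.ofReal_le_ofReal (gaussianPDFReal_le_of_sq_le (h x hx))

lemma tvDist_gaussianReal_of_le (hv : v ≠ 0) {μ μ' : ℝ} (hle : μ' ≤ μ) :
    tvDist (gaussianReal μ v) (gaussianReal μ' v)
      = (gaussianReal μ v).real (Ioi ((μ + μ') / 2))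
        - (gaussianReal μ' v).real (Ioi ((μ + μ') / 2)) := by
  refine tvDist_eq_of_hahnDecomposition (by simp) measurableSet_Ioi
    (fun A hA => gaussianReal_apply_le_of_sq_le hv fun x hx => ?_)
    (fun A hA => gaussianReal_apply_le_of_sq_le hv fun x hx => ?_)
  · have : (μ + μ') / 2 < x := hA hx
    nlinarith
  · have : x ≤ (μ + μ') / 2 := not_lt.1 (hA hx)
    nlinarith

lemma gaussianReal_eq_map_stdGaussian (μ : ℝ) {σ : ℝ} :
    gaussianReal μ (σ ^ 2).toNNReal = (gaussianReal 0 1).map (fun u => σ * u + μ) := by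
  have hscale : (gaussianReal 0 1).map (σ * ·) = gaussianReal 0 (σ ^ 2).toNNReal := by
    rw [gaussianReal_map_const_mul σ, mul_zero, mul_one]
    congr 1
    exact NNReal.eq (by simp [Real.coe_toNNReal _ (sq_nonneg σ)])
  rw [show (fun u => σ * u + μ) = (· + μ) ∘ (σ * ·) from rfl,
    ← Measure.map_map (measurable_add_const μ) (measurable_const_mul σ), hscale,
    gaussianReal_map_add_const μ, zero_add]

lemma gaussianPDFReal_zero_one :
    gaussianPDFReal 0 1 = fun u => (Real.sqrt (2 * Real.pi))⁻¹ * Real.exp (-u ^ 2 / 2) := by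
  funext u
  simp [gaussianPDFReal]

lemma stdNormalCDF_eq_measureReal (x : ℝ) :
    stdNormalCDF x = (gaussianReal 0 1).real (Iic x) := by
  rw [measureReal_def, gaussianReal_apply_eq_integral 0 one_ne_zero,
    ENNReal.toReal_ofReal (integral_nonneg fun _ => gaussianPDFReal_nonneg _ _ _), stdNormalCDF,
    gaussianPDFReal_zero_one]

lemma measureReal_gaussianReal_Iic (μ t : ℝ) {σ : ℝ} (hσ : 0 < σ) :
    (gaussianReal μ (σ ^ 2).toNNReal).real (Iic t) = stdNormalCDF ((t - μ) / σ) := by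
  have hpre : (fun u => σ * u + μ) ⁻¹' Iic t = Iic ((t - μ) / σ) := by
    ext u
    simp only [mem_preimage, mem_Iic, le_div_iff₀ hσ]
    constructor <;> intro <;> linarith
  rw [gaussianReal_eq_map_stdGaussian, measureReal_def,
    Measure.map_apply ((measurable_const_mul σ).add_const μ) measurableSet_Iic, hpre,
    stdNormalCDF_eq_measureReal, measureReal_def]

lemma measureReal_gaussianReal_Ioi (μ t : ℝ) {σ : ℝ} (hσ : 0 < σ) :
    (gaussianReal μ (σ ^ 2).toNNReal).real (Ioi t) = 1 - stdNormalCDF ((t - μ) / σ) := by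
  rw [← compl_Iic, probReal_compl_eq_one_sub measurableSet_Iic,
    measureReal_gaussianReal_Iic μ t hσ]

lemma abs_stdNormalCDF_sub_le (a b : ℝ) :
    |stdNormalCDF b - stdNormalCDF a| ≤ |b - a| / Real.sqrt (2 * Real.pi) := by
  have hφ : Integrable fun u => (Real.sqrt (2 * Real.pi))⁻¹ * Real.exp (-u ^ 2 / 2) := by
    simpa only [gaussianPDFReal_zero_one] using integrable_gaussianPDFReal 0 1
  rw [stdNormalCDF, stdNormalCDF,
    intervalIntegral.integral_Iic_sub_Iic hφ.integrableOn hφ.integrableOn, ← Real.norm_eq_abs,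
    div_eq_inv_mul]
  refine intervalIntegral.norm_integral_le_of_norm_le_const fun x _ => ?_
  have : Real.exp (-x ^ 2 / 2) ≤ 1 := Real.exp_le_one_iff.2 (by nlinarith)
  rw [Real.norm_of_nonneg (by positivity)]
  exact mul_le_of_le_one_right (by positivity) this

lemma tvDist_gaussianReal (μ μ' : ℝ) {σ : ℝ} (hσ : 0 < σ) :
    tvDist (gaussianReal μ (σ ^ 2).toNNReal) (gaussianReal μ' (σ ^ 2).toNNReal)
      = stdNormalCDF (|μ - μ'| / (2 * σ)) - stdNormalCDF (-(|μ - μ'| / (2 * σ))) := by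
  wlog hle : μ' ≤ μ generalizing μ μ'
  · rw [tvDist_comm, abs_sub_comm]
    exact this μ' μ (le_of_not_ge hle)
  have hv : (σ ^ 2).toNNReal ≠ 0 := (Real.toNNReal_pos.2 (by positivity)).ne'
  have hleft : ((μ + μ') / 2 - μ) / σ = -((μ - μ') / (2 * σ)) := by
    field_simp
    ring
  have hright : ((μ + μ') / 2 - μ') / σ = (μ - μ') / (2 * σ) := by
    field_simp
    ring
  rw [tvDist_gaussianReal_of_le hv hle, measureReal_gaussianReal_Ioi _ _ hσ,
    measureReal_gaussianReal_Ioi _ _ hσ, hleft, hright, abs_of_nonneg (sub_nonneg.2 hle)]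
  ring

end Gaussian

/-- for Gaussians with common variance `σ² > 0`,
`d_TV(N(μ,σ²), N(μ',σ²)) = Φ(|μ−μ'|/(2σ)) − Φ(−|μ−μ'|/(2σ))`, and consequently
`d_TV(N(μ,σ²), N(μ',σ²)) ≤ |μ−μ'|/√(2πσ²)`. -/
theorem stmt18 (μ μ' σ : ℝ) (hσ : 0 < σ) :
    tvDist (gaussianReal μ (Real.toNNReal (σ ^ 2)))
           (gaussianReal μ' (Real.toNNReal (σ ^ 2)))
        = stdNormalCDF (|μ - μ'| / (2 * σ)) - stdNormalCDF (-(|μ - μ'| / (2 * σ)))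
      ∧ tvDist (gaussianReal μ (Real.toNNReal (σ ^ 2)))
               (gaussianReal μ' (Real.toNNReal (σ ^ 2)))
          ≤ |μ - μ'| / Real.sqrt (2 * Real.pi * σ ^ 2) := by
  have htv := tvDist_gaussianReal μ μ' hσ
  refine ⟨htv, htv ▸ ?_⟩
  have hsqrt : Real.sqrt (2 * Real.pi * σ ^ 2) = Real.sqrt (2 * Real.pi) * σ := by
    rw [Real.sqrt_mul (by positivity), Real.sqrt_sq hσ.le]
  calc _ ≤ |(|μ - μ'| / (2 * σ) - -(|μ - μ'| / (2 * σ)))| / Real.sqrt (2 * Real.pi) :=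
        (le_abs_self _).trans (abs_stdNormalCDF_sub_le _ _)
    _ = |μ - μ'| / Real.sqrt (2 * Real.pi * σ ^ 2) := by
        rw [sub_neg_eq_add, abs_of_nonneg (by positivity), hsqrt]
        field_simp
        ring
end
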